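/- arXiv:2401.00130 — 6 statements merged into one kernel-verified Lean document; each statement's English description precedes it below -/
import Mathlib

section
/- Let 𝒮 be a triangulated category with a good metric ℳ = {ℳ_n}, let 𝒜 be a full subcategory of 𝒮, and let X_0 →^{f_1} X_1 →^{f_2} X_2 → ⋯ be a Cauchy sequence with respect to ℳ with X_n ∈ 𝒜 for all n. If there exists m ∈ ℕ such that 𝒜 ⊆ ℳ_m^⊥ (or such that 𝒜 ⊆ ^⊥ℳ_m), then the sequence is stable: there exists t ∈ ℕ such that f_{n+1} : X_n → X_{n+1} is an isomorphism for all n ≥ t. -/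
open CategoryTheory Limits Pretriangulated

universe v u

namespace Paper

variable (C : Type u) [Category.{v} C] [HasZeroObject C] [HasShift C ℤ]
  [Preadditive C] [∀ n : ℤ, (shiftFunctor C n).Additive] [Pretriangulated C]

/-- `Z` is a direct sum of `X` and `Y`. -/
def IsDirSum {C : Type u} [Category.{v} C] [Preadditive C] (Z X Y : C) : Prop :=
  ∃ (i₁ : X ⟶ Z) (i₂ : Y ⟶ Z) (p₁ : Z ⟶ X) (p₂ : Z ⟶ Y),
    i₁ ≫ p₁ = 𝟙 X ∧ i₂ ≫ p₂ = 𝟙 Y ∧ i₁ ≫ p₂ = 0 ∧ i₂ ≫ p₁ = 0 ∧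
    p₁ ≫ i₁ + p₂ ≫ i₂ = 𝟙 Z

/-- The extension `A * B` of two classes of objects. -/
def star (A B : Set C) : Set C :=
  {Z | ∃ (X Y : C) (f : X ⟶ Z) (g : Z ⟶ Y) (h : Y ⟶ (X⟦(1:ℤ)⟧ : C)),
      X ∈ A ∧ Y ∈ B ∧ Triangle.mk f g h ∈ distTriang C}

/-- Closure of a class of objects under finite direct sums and isomorphism. -/
inductive addClos (A : Set C) : C → Prop
  | of {X Y : C} (e : X ≅ Y) (hY : Y ∈ A) : addClos A X
  | zero {X : C} (hX : IsZero X) : addClos A X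
  | dirSum {Z X Y : C} (hX : addClos A X) (hY : addClos A Y) (h : IsDirSum Z X Y) :
      addClos A Z

/-- `coprodN A n` is `coprod_n (A)`; by convention `coprodN A 0` consists of zero objects. -/
def coprodN (A : Set C) : ℕ → Set C
  | 0 => {X | IsZero X}
  | 1 => setOf (addClos C A)
  | (n+2) => star C (setOf (addClos C A)) (coprodN A (n+1))

/-- Direct summands of objects in `A`. -/
def smd (A : Set C) : Set C := {X | ∃ (Z Y : C), Z ∈ A ∧ IsDirSum Z X Y}

/-- The class `G[I] = {G[-i] : i ∈ I}` (up to isomorphism). -/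
def shiftsOf (G : C) (I : Set ℤ) : Set C :=
  {X | ∃ i ∈ I, Nonempty (X ≅ (G⟦(-i : ℤ)⟧ : C))}

/-- `⟨G⟩ₙ^I := smd (coprodₙ (G[I]))`. -/
def genN (G : C) (I : Set ℤ) (n : ℕ) : Set C := smd C (coprodN C (shiftsOf C G I) n)

/-- `⟨G⟩^I := ⋃_{n > 0} ⟨G⟩ₙ^I`. -/
def gen (G : C) (I : Set ℤ) : Set C := {X | ∃ n : ℕ, X ∈ genN C G I (n+1)}

/-- The right orthogonal `G[I]^⊥`. -/
def rPerpShifts (G : C) (I : Set ℤ) : Set C :=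
  {Y | ∀ i ∈ I, ∀ f : (G⟦(-i : ℤ)⟧ : C) ⟶ Y, f = 0}

/-- `fd(𝒮, G) ≤ m` : `G(-∞,-1]^⊥ ⊆ ⟨G⟩^{[0,∞)}[m] = ⟨G⟩^{[-m,∞)}`. -/
def fdLE (G : C) (m : ℤ) : Prop :=
  ∀ X ∈ rPerpShifts C G (Set.Iic (-1)), X ∈ gen C G (Set.Ici (-m))

/-- `fd(𝒮ᵒᵖ, Gᵒᵖ) ≤ m`, expressed inside `𝒮`. -/
def fdOpLE (G : C) (m : ℤ) : Prop :=
  ∀ X : C, (∀ j : ℤ, j ≤ -1 → ∀ f : X ⟶ (G⟦j⟧ : C), f = 0) →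
    X ∈ gen C G (Set.Iic m)

/-- A t-structure on `C`, given by its aisle `le = 𝒮^{≤0}` and coaisle `ge = 𝒮^{≥0}`. -/
structure TStructure where
  le : Set C
  ge : Set C
  le_iso : ∀ ⦃X Y : C⦄, (X ≅ Y) → X ∈ le → Y ∈ le
  ge_iso : ∀ ⦃X Y : C⦄, (X ≅ Y) → X ∈ ge → Y ∈ ge
  le_shift : ∀ X ∈ le, (X⟦(1:ℤ)⟧ : C) ∈ le
  ge_shift : ∀ X ∈ ge, (X⟦(-1:ℤ)⟧ : C) ∈ ge
  hom_zero : ∀ X ∈ le, ∀ Y ∈ ge, ∀ f : (X⟦(1:ℤ)⟧ : C) ⟶ Y, f = 0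
  triangle : ∀ X : C, ∃ (A B : C) (_ : A ∈ le) (_ : B ∈ ge)
      (f : ((A⟦(1:ℤ)⟧ : C)) ⟶ X) (g : X ⟶ B) (h : B ⟶ ((A⟦(1:ℤ)⟧ : C)⟦(1:ℤ)⟧)),
      Triangle.mk f g h ∈ distTriang C

variable {C}

/-- bounded above: `𝒮 = ⋃ₙ 𝒮^{≤n}`. -/
def TStructure.BoundedAbove (T : TStructure C) : Prop :=
  ∀ X : C, ∃ n : ℕ, (X⟦(n : ℤ)⟧ : C) ∈ T.le

/-- bounded below: `𝒮 = ⋃ₙ 𝒮^{≥-n}`. -/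
def TStructure.BoundedBelow (T : TStructure C) : Prop :=
  ∀ X : C, ∃ n : ℕ, (X⟦(-(n : ℤ))⟧ : C) ∈ T.ge

/-- bounded t-structure. -/
def TStructure.Bounded (T : TStructure C) : Prop :=
  T.BoundedAbove ∧ T.BoundedBelow

/-- A good metric on `C`. -/
structure IsGoodMetric (M : ℕ → Set C) : Prop where
  zero_mem : ∀ n : ℕ, ∀ X : C, IsZero X → X ∈ M n
  ext : ∀ n : ℕ, star C (M n) (M n) ⊆ M n
  shift_neg : ∀ n : ℕ, ∀ X ∈ M (n+1), (X⟦(-1:ℤ)⟧ : C) ∈ M n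
  mono : ∀ n : ℕ, ∀ X ∈ M (n+1), X ∈ M n
  shift_pos : ∀ n : ℕ, ∀ X ∈ M (n+1), (X⟦(1:ℤ)⟧ : C) ∈ M n

variable (C)

/-- A chain of morphisms indexed by `ℕ`. -/
structure Chain where
  X : ℕ → C
  f : ∀ n : ℕ, X n ⟶ X (n+1)

/-- `Z` is a cone of `f : A ⟶ B`. -/
def IsConeOf {A B : C} (Z : C) (f : A ⟶ B) : Prop :=
  ∃ (g : B ⟶ Z) (h : Z ⟶ (A⟦(1:ℤ)⟧ : C)), Triangle.mk f g h ∈ distTriang C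

variable {C}

/-- Cauchy sequence with respect to a (good) metric `M`. -/
def Chain.IsCauchy (c : Chain C) (M : ℕ → Set C) : Prop :=
  ∀ i : ℕ, ∃ N : ℕ, ∀ j : ℕ, N ≤ j → ∃ Z : C, IsConeOf C Z (c.f j) ∧ Z ∈ M i

/-!
For `n` large the cone `Z` of `f n` lies in `M (m+1)`, so both `Z` and `Z⟦-1⟧` lie in `M m`.
If `A ⊆ (M m)^⊥`, the connecting map `Z ⟶ X n⟦1⟧` vanishes (shift it by `-1`), so `𝟙 Z` factors
through `g : X (n+1) ⟶ Z` via some `Z ⟶ X (n+1)`, which vanishes too; hence `Z ≅ 0` and `f n`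
is an isomorphism. The case `A ⊆ ^⊥(M m)` is dual: now `g = 0`, and `𝟙 Z` factors through the
connecting map via some `X n⟦1⟧ ⟶ Z`, which vanishes after shifting by `-1`.
-/

section

variable {C : Type u} [Category.{v} C] [HasShift C ℤ] [Preadditive C]
  [∀ n : ℤ, (shiftFunctor C n).Additive]

lemma eq_zero_of_hom_shift_neg_one_eq_zero {X Z : C} (h : Z ⟶ X⟦(1:ℤ)⟧)
    (H : ∀ u : Z⟦(-1:ℤ)⟧ ⟶ X, u = 0) : h = 0 := by
  let e := (shiftFunctorCompIsoId C (1:ℤ) (-1:ℤ) (by norm_num)).app X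
  rw [← (shiftFunctor C (-1:ℤ)).map_eq_zero_iff, ← cancel_mono e.hom, zero_comp]
  exact H _

lemma eq_zero_of_hom_to_shift_neg_one_eq_zero {X Z : C} (v : X⟦(1:ℤ)⟧ ⟶ Z)
    (H : ∀ u : X ⟶ Z⟦(-1:ℤ)⟧, u = 0) : v = 0 := by
  let e := (shiftFunctorCompIsoId C (1:ℤ) (-1:ℤ) (by norm_num)).app X
  rw [← (shiftFunctor C (-1:ℤ)).map_eq_zero_iff, ← cancel_epi e.inv, comp_zero]
  exact H _

variable [HasZeroObject C] [Pretriangulated C]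

lemma _root_.CategoryTheory.Pretriangulated.Triangle.isZero₃_of_mor₃_eq_zero
    {T : Triangle C} (hT : T ∈ distTriang C) (h₃ : T.mor₃ = 0) (H : ∀ u : T.obj₃ ⟶ T.obj₂, u = 0) :
    IsZero T.obj₃ := by
  obtain ⟨u, hu⟩ := T.coyoneda_exact₃ hT (𝟙 _) (by rw [h₃, comp_zero])
  rw [IsZero.iff_id_eq_zero, hu, H u, zero_comp]

lemma _root_.CategoryTheory.Pretriangulated.Triangle.isZero₃_of_mor₂_eq_zero
    {T : Triangle C} (hT : T ∈ distTriang C) (h₂ : T.mor₂ = 0)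
    (H : ∀ v : T.obj₁⟦(1:ℤ)⟧ ⟶ T.obj₃, v = 0) :
    IsZero T.obj₃ := by
  obtain ⟨v, hv⟩ := T.yoneda_exact₃ hT (𝟙 _) (by rw [h₂, zero_comp])
  rw [IsZero.iff_id_eq_zero, hv, H v, comp_zero]

variable {M : ℕ → Set C} {m : ℕ} {X Y Z : C} {f : X ⟶ Y} {g : Y ⟶ Z} {h : Z ⟶ X⟦(1:ℤ)⟧}

lemma isIso_of_cone_mem_of_forall_hom_to_eq_zero (hM : IsGoodMetric M)
    (hT : Triangle.mk f g h ∈ distTriang C) (hZ : Z ∈ M (m + 1))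
    (hX : ∀ W ∈ M m, ∀ u : W ⟶ X, u = 0) (hY : ∀ W ∈ M m, ∀ u : W ⟶ Y, u = 0) :
    IsIso f := by
  refine (Triangle.isZero₃_iff_isIso₁ _ hT).1 (Triangle.isZero₃_of_mor₃_eq_zero hT ?_ ?_)
  · exact eq_zero_of_hom_shift_neg_one_eq_zero h (hX _ (hM.shift_neg m Z hZ))
  · exact hY _ (hM.mono m Z hZ)

lemma isIso_of_cone_mem_of_forall_hom_from_eq_zero (hM : IsGoodMetric M)
    (hT : Triangle.mk f g h ∈ distTriang C) (hZ : Z ∈ M (m + 1))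
    (hX : ∀ W ∈ M m, ∀ u : X ⟶ W, u = 0) (hY : ∀ W ∈ M m, ∀ u : Y ⟶ W, u = 0) :
    IsIso f := by
  refine (Triangle.isZero₃_iff_isIso₁ _ hT).1 (Triangle.isZero₃_of_mor₂_eq_zero hT ?_ ?_)
  · exact hY _ (hM.mono m Z hZ) g
  · exact fun v => eq_zero_of_hom_to_shift_neg_one_eq_zero v (hX _ (hM.shift_neg m Z hZ))

end

/-- A Cauchy sequence with respect to a good metric `M`, whose terms all lie
in a full subcategory `A` contained in `(M m)^⊥` (or in `^⊥(M m)`) for some `m`, is stable. -/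
theorem cauchy_sequence_stable
    (C : Type u) [Category.{v} C] [HasZeroObject C] [HasShift C ℤ]
    [Preadditive C] [∀ n : ℤ, (shiftFunctor C n).Additive] [Pretriangulated C]
    (M : ℕ → Set C) (hM : IsGoodMetric M) (A : Set C)
    (c : Chain C) (hc : c.IsCauchy M) (hmem : ∀ n : ℕ, c.X n ∈ A)
    (horth : (∃ m : ℕ, ∀ Y ∈ A, ∀ W ∈ M m, ∀ f : W ⟶ Y, f = 0) ∨
             (∃ m : ℕ, ∀ Y ∈ A, ∀ W ∈ M m, ∀ f : Y ⟶ W, f = 0)) :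
    ∃ t : ℕ, ∀ n : ℕ, t ≤ n → IsIso (c.f n) := by
  obtain ⟨m, horth⟩ | ⟨m, horth⟩ := horth
  all_goals
    obtain ⟨N, hN⟩ := hc (m + 1)
    refine ⟨N, fun n hn => ?_⟩
    obtain ⟨Z, ⟨g, h, hT⟩, hZ⟩ := hN n hn
  · exact isIso_of_cone_mem_of_forall_hom_to_eq_zero hM hT hZ
      (horth _ (hmem n)) (horth _ (hmem (n + 1)))
  · exact isIso_of_cone_mem_of_forall_hom_from_eq_zero hM hT hZ
      (horth _ (hmem n)) (horth _ (hmem (n + 1)))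

end Paper
end

section
/- Let 𝒮 be a triangulated category with an object G such that Hom_𝒮(G[i], G) = 0 for all i ≥ d+1, where d ∈ ℕ. Then for every n ∈ ℕ, any morphism D → F in 𝒮 with D ∈ ⟨G⟩_{n+1} and F ∈ G(-∞,-1]^⊥ factors through an object of ⟨G⟩_{n+1}^{[-n(d+1),∞)}. -/
open CategoryTheory Limits Pretriangulated

universe v u

/-!
For a cutoff `a` one approximates every `Z ∈ coprod_{n+1}(G[ℤ])` by a morphism `v : Z ⟶ E` with
`E ∈ coprod_{n+1}(G[a - n(d+1), ∞))` such that `Hom(v, F)` is surjective for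
`F ∈ G(-∞, a-1]^⊥` and injective for `F ∈ G(-∞, a-2]^⊥`; the theorem is the case `a = 0`.
For `n = 0`, split `Z = A ⊕ B` with `A` built from `G[a, ∞)` and `B` from `G(-∞, a-1]`, and
project onto `A`. For the inductive step write `Z` as an extension `X → Z → Y → X[1]`, truncate
`X` to `p : X ⟶ A`, and approximate `Y` by `v' : Y ⟶ E'` at the cutoff `a - (d+1)`. The
hypothesis on `G` puts `A[1]` into `G(-∞, a-d-2]^⊥`, so the attaching map `Y → X[1] → A[1]`
factors through `v'`; its cone `E` receives a morphism of triangles `(p, v, v')`, and a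
four-lemma argument on `Hom(-, F)` transfers the two properties from `p` and `v'` to `v`.
-/

namespace Paper

section DirSum

variable {C : Type*} [Category C] [Preadditive C]

lemma IsDirSum.symm {Z X Y : C} (h : IsDirSum Z X Y) : IsDirSum Z Y X := by
  obtain ⟨i₁, i₂, p₁, p₂, h₁, h₂, h₃, h₄, h₅⟩ := h
  exact ⟨i₂, i₁, p₂, p₁, h₂, h₁, h₄, h₃, by rw [add_comm, h₅]⟩

lemma isDirSum_of_isZero_right {X Y : C} (hY : IsZero Y) : IsDirSum X X Y :=
  ⟨𝟙 X, 0, 𝟙 X, 0, Category.comp_id _, hY.eq_of_src _ _, comp_zero, zero_comp, by simp⟩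

lemma IsDirSum.map {D : Type*} [Category D] [Preadditive D] (Φ : C ⥤ D) [Φ.Additive]
    {Z X Y : C} (h : IsDirSum Z X Y) : IsDirSum (Φ.obj Z) (Φ.obj X) (Φ.obj Y) := by
  obtain ⟨i₁, i₂, p₁, p₂, h₁, h₂, h₃, h₄, h₅⟩ := h
  refine ⟨Φ.map i₁, Φ.map i₂, Φ.map p₁, Φ.map p₂, ?_, ?_, ?_, ?_, ?_⟩ <;>
    simp only [← Φ.map_comp, ← Φ.map_add, h₁, h₂, h₃, h₄, h₅, Φ.map_id, Φ.map_zero]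

lemma mem_smd_of_mem [HasZeroObject C] {A : Set C} {X : C} (hX : X ∈ A) : X ∈ smd C A :=
  ⟨X, _, hX, isDirSum_of_isZero_right (isZero_zero C)⟩

variable [HasBinaryBiproducts C]

lemma isDirSum_iff_nonempty_iso_biprod {Z X Y : C} : IsDirSum Z X Y ↔ Nonempty (Z ≅ X ⊞ Y) := by
  constructor
  · rintro ⟨i₁, i₂, p₁, p₂, h₁, h₂, h₃, h₄, h₅⟩
    exact ⟨{ hom := biprod.lift p₁ p₂
             inv := biprod.desc i₁ i₂
             hom_inv_id := by rw [biprod.lift_desc, h₅]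
             inv_hom_id := by ext <;> simp [h₁, h₂, h₃, h₄] }⟩
  · rintro ⟨e⟩
    refine ⟨biprod.inl ≫ e.inv, biprod.inr ≫ e.inv, e.hom ≫ biprod.fst, e.hom ≫ biprod.snd,
      by simp, by simp, by simp, by simp, ?_⟩
    rw [Category.assoc, Category.assoc, ← Preadditive.comp_add, ← Category.assoc biprod.fst,
      ← Category.assoc biprod.snd, ← Preadditive.add_comp, biprod.total, Category.id_comp,
      e.hom_inv_id]

lemma isDirSum_biprod (X Y : C) : IsDirSum (X ⊞ Y) X Y :=
  isDirSum_iff_nonempty_iso_biprod.2 ⟨Iso.refl _⟩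

lemma IsDirSum.interchange {Z X Y X₁ X₂ Y₁ Y₂ : C} (h : IsDirSum Z X Y)
    (hX : IsDirSum X X₁ X₂) (hY : IsDirSum Y Y₁ Y₂) : IsDirSum Z (X₁ ⊞ Y₁) (X₂ ⊞ Y₂) := by
  obtain ⟨e⟩ := isDirSum_iff_nonempty_iso_biprod.1 h
  obtain ⟨eX⟩ := isDirSum_iff_nonempty_iso_biprod.1 hX
  obtain ⟨eY⟩ := isDirSum_iff_nonempty_iso_biprod.1 hY
  exact isDirSum_iff_nonempty_iso_biprod.2 ⟨e ≪≫ biprod.mapIso eX eY ≪≫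
    biprod.associator _ _ _ ≪≫ biprod.mapIso (Iso.refl _) ((biprod.associator _ _ _).symm ≪≫
      biprod.mapIso (biprod.braiding _ _) (Iso.refl _) ≪≫ biprod.associator _ _ _) ≪≫
    (biprod.associator _ _ _).symm⟩

end DirSum

section AddClos

variable {C : Type*} [Category C] [Preadditive C]

lemma addClos_map {D : Type*} [Category D] [Preadditive D] (Φ : C ⥤ D) [Φ.Additive]
    {A : Set C} {B : Set D} (h : ∀ W ∈ A, Φ.obj W ∈ B) {X : C} (hX : addClos C A X) :
    addClos D B (Φ.obj X) := by
  induction hX with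
  | of e hY => exact .of (Φ.mapIso e) (h _ hY)
  | zero hX => exact .zero (Φ.map_isZero hX)
  | dirSum _ _ hs ihX ihY => exact .dirSum ihX ihY (hs.map Φ)

lemma addClos_mono {A B : Set C} (h : A ⊆ B) {X : C} (hX : addClos C A X) : addClos C B X :=
  addClos_map (𝟭 C) h hX

lemma addClos.eq_zero_of_src {A : Set C} {T : C} (hA : ∀ W ∈ A, ∀ f : W ⟶ T, f = 0) {X : C}
    (hX : addClos C A X) (f : X ⟶ T) : f = 0 := by
  induction hX with
  | of e hY => rw [← e.hom_inv_id_assoc f, hA _ hY (e.inv ≫ f), comp_zero]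
  | zero hX => exact hX.eq_of_src _ _
  | dirSum _ _ hs ihX ihY =>
    obtain ⟨i₁, i₂, p₁, p₂, -, -, -, -, total⟩ := hs
    rw [← Category.id_comp f, ← total, Preadditive.add_comp, Category.assoc, Category.assoc,
      ihX (i₁ ≫ f), ihY (i₂ ≫ f), comp_zero, comp_zero, add_zero]

lemma addClos.eq_zero_of_tgt {A : Set C} {S : C} (hA : ∀ W ∈ A, ∀ f : S ⟶ W, f = 0) {X : C}
    (hX : addClos C A X) (f : S ⟶ X) : f = 0 := by
  induction hX with
  | of e hY => rw [← Category.comp_id f, ← e.hom_inv_id, ← Category.assoc, hA _ hY (f ≫ e.hom),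
      zero_comp]
  | zero hX => exact hX.eq_of_tgt _ _
  | dirSum _ _ hs ihX ihY =>
    obtain ⟨i₁, i₂, p₁, p₂, -, -, -, -, total⟩ := hs
    rw [← Category.comp_id f, ← total, Preadditive.comp_add, ← Category.assoc, ← Category.assoc,
      ihX (f ≫ p₁), ihY (f ≫ p₂), zero_comp, zero_comp, add_zero]

open ZeroObject in
lemma addClos_split [HasZeroObject C] [HasBinaryBiproducts C] {A A₁ A₂ : Set C}
    (hA : A ⊆ A₁ ∪ A₂) {X : C} (hX : addClos C A X) :
    ∃ X₁ X₂, addClos C A₁ X₁ ∧ addClos C A₂ X₂ ∧ IsDirSum X X₁ X₂ := by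
  induction hX with
  | @of X _ e hY =>
    have hX : IsDirSum X X 0 := isDirSum_of_isZero_right (isZero_zero C)
    rcases hA hY with h₁ | h₂
    · exact ⟨X, 0, .of e h₁, .zero (isZero_zero C), hX⟩
    · exact ⟨0, X, .zero (isZero_zero C), .of e h₂, hX.symm⟩
  | zero hX => exact ⟨_, _, .zero hX, .zero hX, isDirSum_of_isZero_right hX⟩
  | dirSum _ _ hs ihX ihY =>
    obtain ⟨X₁, X₂, hX₁, hX₂, hX⟩ := ihX
    obtain ⟨Y₁, Y₂, hY₁, hY₂, hY⟩ := ihY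
    exact ⟨_, _, .dirSum hX₁ hY₁ (isDirSum_biprod _ _), .dirSum hX₂ hY₂ (isDirSum_biprod _ _),
      hs.interchange hX hY⟩

end AddClos

section Shifts

variable {C : Type*} [Category C] [HasShift C ℤ]

lemma shiftsOf_mono {G : C} {I J : Set ℤ} (h : I ⊆ J) : shiftsOf C G I ⊆ shiftsOf C G J :=
  fun _ ⟨i, hi, e⟩ => ⟨i, h hi, e⟩

lemma shiftsOf_subset_union {G : C} {I J K : Set ℤ} (h : I ⊆ J ∪ K) :
    shiftsOf C G I ⊆ shiftsOf C G J ∪ shiftsOf C G K :=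
  fun _ ⟨i, hi, e⟩ => (h hi).imp (fun hj => ⟨i, hj, e⟩) (fun hk => ⟨i, hk, e⟩)

lemma shift_mem_shiftsOf {G W : C} {I J : Set ℤ} (h : ∀ i ∈ I, i - 1 ∈ J)
    (hW : W ∈ shiftsOf C G I) : (W⟦(1 : ℤ)⟧ : C) ∈ shiftsOf C G J := by
  obtain ⟨i, hi, ⟨e⟩⟩ := hW
  exact ⟨i - 1, h i hi,
    ⟨(shiftFunctor C 1).mapIso e ≪≫ (shiftFunctorAdd' C (-i) 1 (-(i - 1)) (by ring)).symm.app G⟩⟩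

variable [Preadditive C]

lemma rPerpShifts_anti {G : C} {I J : Set ℤ} (h : I ⊆ J) :
    rPerpShifts C G J ⊆ rPerpShifts C G I :=
  fun _ hF i hi => hF i (h hi)

lemma hom_eq_zero_of_mem_shiftsOf {G W F : C} {I : Set ℤ} (hW : W ∈ shiftsOf C G I)
    (hF : F ∈ rPerpShifts C G I) (f : W ⟶ F) : f = 0 := by
  obtain ⟨i, hi, ⟨e⟩⟩ := hW
  rw [← e.hom_inv_id_assoc f, hF i hi (e.inv ≫ f), comp_zero]

lemma mem_rPerpShifts_of_addClos {G X : C} {A : Set C} {I : Set ℤ}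
    (h : A ⊆ rPerpShifts C G I) (hX : addClos C A X) : X ∈ rPerpShifts C G I :=
  fun i hi => hX.eq_zero_of_tgt fun _ hW => h hW i hi

variable [∀ n : ℤ, (shiftFunctor C n).Additive]

lemma shift_hom_eq_zero {X Y : C} {a b c : ℤ} (h : a = c + b)
    (hXY : ∀ g : (X⟦c⟧ : C) ⟶ Y, g = 0) (f : (X⟦a⟧ : C) ⟶ Y⟦b⟧) : f = 0 := by
  apply (shiftFunctor C (-b)).map_injective
  rw [Functor.map_zero, ← cancel_epi ((shiftFunctorAdd' C a (-b) c (by omega)).hom.app X),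
    ← cancel_mono ((shiftFunctorCompIsoId C b (-b) (by omega)).hom.app Y), comp_zero, zero_comp,
    Category.assoc]
  exact hXY _

lemma shift_mem_rPerpShifts {G F : C} {c : ℤ} (hF : F ∈ rPerpShifts C G (Set.Iic c)) :
    (F⟦(1 : ℤ)⟧ : C) ∈ rPerpShifts C G (Set.Iic (c - 1)) := fun i hi =>
  shift_hom_eq_zero (c := -(i + 1)) (by ring)
    (hF (i + 1) (by simp only [Set.mem_Iic] at hi ⊢; omega))

lemma shiftsOf_Ici_subset_rPerpShifts {G : C} {d : ℕ}
    (hG : ∀ i : ℤ, (d : ℤ) + 1 ≤ i → ∀ f : (G⟦i⟧ : C) ⟶ G, f = 0) (a : ℤ) :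
    shiftsOf C G (Set.Ici a) ⊆ rPerpShifts C G (Set.Iic (a - d - 1)) := by
  rintro W ⟨k, hk, ⟨e⟩⟩ i hi f
  simp only [Set.mem_Ici, Set.mem_Iic] at hk hi
  rw [← Category.comp_id f, ← e.hom_inv_id, ← Category.assoc,
    shift_hom_eq_zero (c := -i + k) (by ring) (hG _ (by omega)) (f ≫ e.hom), zero_comp]

lemma shift_mem_rPerpShifts_of_addClos {G : C} {d : ℕ}
    (hG : ∀ i : ℤ, (d : ℤ) + 1 ≤ i → ∀ f : (G⟦i⟧ : C) ⟶ G, f = 0) {a : ℤ} {A : C}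
    (hA : addClos C (shiftsOf C G (Set.Ici a)) A) :
    (A⟦(1 : ℤ)⟧ : C) ∈ rPerpShifts C G (Set.Iic (a - d - 2)) := by
  have hA₁ : addClos C (shiftsOf C G (Set.Ici (a - 1))) (A⟦(1 : ℤ)⟧) :=
    addClos_map _ (fun _ => shift_mem_shiftsOf fun i hi => by
      simp only [Set.mem_Ici] at hi ⊢; omega) hA
  exact mem_rPerpShifts_of_addClos ((shiftsOf_Ici_subset_rPerpShifts hG (a - 1)).trans
    (rPerpShifts_anti (Set.Iic_subset_Iic.2 (by omega)))) hA₁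

end Shifts

section HomExactness

variable {C : Type*} [Category C] [Preadditive C]

def IsSurjOnHom {Z E : C} (v : Z ⟶ E) (F : C) : Prop := ∀ u : Z ⟶ F, ∃ w : E ⟶ F, v ≫ w = u

def IsInjOnHom {Z E : C} (v : Z ⟶ E) (F : C) : Prop := ∀ e : E ⟶ F, v ≫ e = 0 → e = 0

lemma isInjOnHom_of_epi {Z E : C} (v : Z ⟶ E) [Epi v] (F : C) : IsInjOnHom v F :=
  fun _ he => (cancel_epi v).1 (he.trans comp_zero.symm)

lemma isSurjOnHom_map_of_total {D : Type*} [Category D] [Preadditive D] (Φ : C ⥤ D)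
    [Φ.Additive] {X A B : C} {i₁ : A ⟶ X} {i₂ : B ⟶ X} {p₁ : X ⟶ A} {p₂ : X ⟶ B}
    (total : p₁ ≫ i₁ + p₂ ≫ i₂ = 𝟙 X) {F : D} (hB : ∀ g : Φ.obj B ⟶ F, g = 0) :
    IsSurjOnHom (Φ.map p₁) F := fun u =>
  ⟨Φ.map i₁ ≫ u, by
    conv_rhs => rw [← Category.id_comp u, ← Φ.map_id, ← total]
    rw [Φ.map_add, Φ.map_comp, Φ.map_comp, Preadditive.add_comp, Category.assoc, Category.assoc,
      hB (Φ.map i₂ ≫ u), comp_zero, add_zero]⟩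

end HomExactness

section Triangles

variable {C : Type*} [Category C] [HasZeroObject C] [HasShift C ℤ] [Preadditive C]
  [∀ n : ℤ, (shiftFunctor C n).Additive] [Pretriangulated C]

lemma triangle_yoneda_exact₁ (T : Triangle C) (hT : T ∈ distTriang C) {X : C}
    (f : T.obj₁ ⟶ X) (hf : T.mor₃ ≫ f⟦(1 : ℤ)⟧' = 0) : ∃ g : T.obj₂ ⟶ X, f = T.mor₁ ≫ g := by
  obtain ⟨g, hg, -⟩ := complete_distinguished_triangle_morphism₂ T _ hT
    (contractible_distinguished X) f 0 (hf.trans zero_comp.symm)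
  exact ⟨g, (hg.trans (Category.comp_id f)).symm⟩

variable {T₁ T₂ : Triangle C} (φ : T₁ ⟶ T₂) (hT₁ : T₁ ∈ distTriang C) (hT₂ : T₂ ∈ distTriang C)
include hT₁ hT₂

lemma isSurjOnHom_hom₂ {F : C} (h₁ : IsSurjOnHom φ.hom₁ F) (h₃ : IsSurjOnHom φ.hom₃ F)
    (h₃' : IsInjOnHom φ.hom₃ (F⟦(1 : ℤ)⟧)) : IsSurjOnHom φ.hom₂ F := by
  intro u
  obtain ⟨ψ, hψ⟩ := h₁ (T₁.mor₁ ≫ u)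
  have obstruction : T₂.mor₃ ≫ ψ⟦(1 : ℤ)⟧' = 0 := h₃' _ (by
    rw [← reassoc_of% φ.comm₃, ← Functor.map_comp, hψ, Functor.map_comp,
      comp_distTriang_mor_zero₃₁_assoc _ hT₁, zero_comp])
  obtain ⟨w₀, rfl⟩ := triangle_yoneda_exact₁ T₂ hT₂ ψ obstruction
  obtain ⟨r, hr⟩ := Triangle.yoneda_exact₂ T₁ hT₁ (u - φ.hom₂ ≫ w₀) (by
    rw [Preadditive.comp_sub, reassoc_of% φ.comm₁, hψ, sub_self])
  obtain ⟨r', hr'⟩ := h₃ r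
  exact ⟨w₀ + T₂.mor₂ ≫ r', by
    rw [Preadditive.comp_add, ← reassoc_of% φ.comm₂, hr', ← hr, add_sub_cancel]⟩

lemma isInjOnHom_hom₂ {F : C} (h₁ : IsInjOnHom φ.hom₁ F)
    (h₁' : IsSurjOnHom (φ.hom₁⟦(1 : ℤ)⟧') F) (h₃ : IsInjOnHom φ.hom₃ F) :
    IsInjOnHom φ.hom₂ F := by
  intro e he
  obtain ⟨e₂, rfl⟩ := Triangle.yoneda_exact₂ T₂ hT₂ e
    (h₁ _ (by rw [← reassoc_of% φ.comm₁, he, comp_zero]))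
  obtain ⟨m, hm⟩ := Triangle.yoneda_exact₃ T₁ hT₁ (φ.hom₃ ≫ e₂)
    (by rw [reassoc_of% φ.comm₂, he])
  obtain ⟨m', rfl⟩ := h₁' m
  have he₂ : e₂ = T₂.mor₃ ≫ m' := sub_eq_zero.1 <| h₃ _ <| by
    rw [Preadditive.comp_sub, hm, reassoc_of% φ.comm₃, sub_self]
  rw [he₂, comp_distTriang_mor_zero₂₃_assoc _ hT₂, zero_comp]

end Triangles

section Approximation

variable {C : Type*} [Category C] [HasZeroObject C] [HasShift C ℤ] [Preadditive C]
  [∀ n : ℤ, (shiftFunctor C n).Additive] [Pretriangulated C] {G : C}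

lemma exists_truncation {X : C} (hX : addClos C (shiftsOf C G Set.univ) X) (a : ℤ) :
    ∃ A, addClos C (shiftsOf C G (Set.Ici a)) A ∧ ∃ p : X ⟶ A, IsSplitEpi p ∧
      (∀ F ∈ rPerpShifts C G (Set.Iic (a - 1)), IsSurjOnHom p F) ∧
      (∀ F ∈ rPerpShifts C G (Set.Iic (a - 2)), IsSurjOnHom (p⟦(1 : ℤ)⟧') F) := by
  have hsplit : (Set.univ : Set ℤ) ⊆ Set.Ici a ∪ Set.Iic (a - 1) := by
    intro i _
    simp only [Set.mem_union, Set.mem_Ici, Set.mem_Iic]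
    omega
  obtain ⟨A, B, hA, hB, i₁, i₂, p₁, p₂, h₁, -, -, -, total⟩ :=
    addClos_split (shiftsOf_subset_union hsplit) hX
  have hB' : addClos C (shiftsOf C G (Set.Iic (a - 2))) (B⟦(1 : ℤ)⟧) :=
    addClos_map _ (fun _ => shift_mem_shiftsOf fun i hi => by
      simp only [Set.mem_Iic] at hi ⊢; omega) hB
  exact ⟨A, hA, p₁, IsSplitEpi.mk' ⟨i₁, h₁⟩,
    fun F hF => isSurjOnHom_map_of_total (𝟭 C) total
      (hB.eq_zero_of_src fun _ hW => hom_eq_zero_of_mem_shiftsOf hW hF),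
    fun F hF => isSurjOnHom_map_of_total (shiftFunctor C 1) total
      (hB'.eq_zero_of_src fun _ hW => hom_eq_zero_of_mem_shiftsOf hW hF)⟩

variable {d : ℕ} (hG : ∀ i : ℤ, (d : ℤ) + 1 ≤ i → ∀ f : (G⟦i⟧ : C) ⟶ G, f = 0)
include hG

theorem exists_approximation (n : ℕ) (a : ℤ) {Z : C}
    (hZ : Z ∈ coprodN C (shiftsOf C G Set.univ) (n + 1)) :
    ∃ E ∈ coprodN C (shiftsOf C G (Set.Ici (a - n * (d + 1)))) (n + 1), ∃ v : Z ⟶ E,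
      (∀ F ∈ rPerpShifts C G (Set.Iic (a - 1)), IsSurjOnHom v F) ∧
      (∀ F ∈ rPerpShifts C G (Set.Iic (a - 2)), IsInjOnHom v F) := by
  induction n generalizing a Z with
  | zero =>
    obtain ⟨A, hA, p, _, hp, -⟩ := exists_truncation hZ a
    refine ⟨A, ?_, p, hp, fun F _ => isInjOnHom_of_epi p F⟩
    rw [Nat.cast_zero, zero_mul, sub_zero]
    exact hA
  | succ n ih =>
    obtain ⟨X, Y, f, g, h, hX, hY, hT⟩ := hZ
    obtain ⟨A, hA, p, _, hp, hp₁⟩ := exists_truncation hX a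
    obtain ⟨E', hE', v', hv'surj, hv'inj⟩ := ih (a - (d + 1)) hY
    obtain ⟨t, ht⟩ := hv'surj _ (rPerpShifts_anti (Set.Iic_subset_Iic.2 (by omega))
      (shift_mem_rPerpShifts_of_addClos hG hA)) (h ≫ p⟦(1 : ℤ)⟧')
    obtain ⟨E, i, c, hTE⟩ := distinguished_cocone_triangle₂ t
    obtain ⟨v, hv₁, hv₂⟩ := complete_distinguished_triangle_morphism₂ _ _ hT hTE p v' ht.symm
    let φ : Triangle.mk f g h ⟶ Triangle.mk i c t := Triangle.homMk _ _ p v v' hv₁ hv₂ ht.symm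
    refine ⟨E, ⟨A, E', i, c, t, addClos_mono (shiftsOf_mono (Set.Ici_subset_Ici.2 ?_)) hA,
      ?_, hTE⟩, v, fun F hF => ?_, fun F hF => ?_⟩
    · exact sub_le_self _ (by positivity)
    · convert hE' using 4; push_cast; ring
    · exact isSurjOnHom_hom₂ φ hT hTE (hp F hF)
        (hv'surj F (rPerpShifts_anti (Set.Iic_subset_Iic.2 (by omega)) hF))
        (hv'inj _ (rPerpShifts_anti (Set.Iic_subset_Iic.2 (by omega))
          (shift_mem_rPerpShifts hF)))
    · exact isInjOnHom_hom₂ φ hT hTE (isInjOnHom_of_epi p F) (hp₁ F hF)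
        (hv'inj F (rPerpShifts_anti (Set.Iic_subset_Iic.2 (by omega)) hF))

end Approximation

/-- If `Hom(G[i], G) = 0` for all `i ≥ d + 1`, then any morphism
`D ⟶ F` with `D ∈ ⟨G⟩_{n+1}` and `F ∈ G(-∞,-1]^⊥` factors through an object of
`⟨G⟩_{n+1}^{[-n(d+1), ∞)}`. -/
theorem factorization_through_bounded_below_part
    (C : Type u) [Category.{v} C] [HasZeroObject C] [HasShift C ℤ]
    [Preadditive C] [∀ n : ℤ, (shiftFunctor C n).Additive] [Pretriangulated C]
    (G : C) (d : ℕ) (hG : ∀ i : ℤ, (d : ℤ) + 1 ≤ i → ∀ f : (G⟦i⟧ : C) ⟶ G, f = 0)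
    (n : ℕ) (D F : C) (u : D ⟶ F)
    (hD : D ∈ genN C G Set.univ (n+1))
    (hF : F ∈ rPerpShifts C G (Set.Iic (-1))) :
    ∃ (E : C) (v : D ⟶ E) (w : E ⟶ F), v ≫ w = u ∧
      E ∈ genN C G (Set.Ici (-((n : ℤ) * ((d : ℤ) + 1)))) (n+1) := by
  obtain ⟨Z, -, hZ, i, -, p, -, hip, -⟩ := hD
  obtain ⟨E, hE, v, hv, -⟩ := exists_approximation hG n 0 hZ
  obtain ⟨w, hw⟩ := hv F (by simpa using hF) (p ≫ u)
  refine ⟨E, i ≫ v, w, by rw [Category.assoc, hw, ← Category.assoc, hip, Category.id_comp], ?_⟩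
  exact mem_smd_of_mem (by simpa using hE)

end Paper
end

section
/- Let 𝒮 be a triangulated category, G an object of 𝒮, and (𝒮^{≤0}, 𝒮^{≥0}) a bounded above t-structure on 𝒮. Then there exists r ∈ ℕ with ⟨G⟩^{(-∞,-r]} ⊆ 𝒮^{≤0}; that is, every bounded above t-structure on 𝒮 is extendable with respect to the G-good metric {⟨G⟩^{(-∞,-n]}}_{n∈ℕ}. -/
/-!
If `G[n] ∈ 𝒮^{≤0}`, then `G[n+1]` lies in the left orthogonal of `𝒮^{≥0}`. A left orthogonal
is closed under isomorphisms, finite sums, summands and extensions, and, because `𝒮^{≥0}` is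
closed under `[-1]`, also under `[1]`; so it contains every `G[-i]` with `i ≤ -(n+1)` and hence
all of `⟨G⟩^{(-∞,-n-1]}`. Finally the left orthogonal of `𝒮^{≥0}` lies in `𝒮^{≤0}`: for `X` in it
the truncation triangle `X' → X → X'' → X'[1]` has `X → X'' = 0`, so `𝟙_{X''}` factors
through `X'[1] ∈ 𝒮^{≤-2}`, which forces `X'' = 0`.
-/

open CategoryTheory Limits Pretriangulated

universe v u

namespace Paper

open ObjectProperty

section Orthogonal

variable {C : Type u} [Category.{v} C] [Preadditive C] {P : ObjectProperty C}

lemma IsDirSum.leftOrthogonal {Z X Y : C} (h : IsDirSum Z X Y)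
    (hX : P.leftOrthogonal X) (hY : P.leftOrthogonal Y) : P.leftOrthogonal Z := by
  intro W f hW
  obtain ⟨i₁, i₂, p₁, p₂, -, -, -, -, hid⟩ := h
  calc f = (p₁ ≫ i₁ + p₂ ≫ i₂) ≫ f := by rw [hid, Category.id_comp]
    _ = p₁ ≫ (i₁ ≫ f) + p₂ ≫ (i₂ ≫ f) := by simp only [Preadditive.add_comp, Category.assoc]
    _ = 0 := by rw [hX (i₁ ≫ f) hW, hY (i₂ ≫ f) hW, comp_zero, comp_zero, add_zero]

lemma IsDirSum.leftOrthogonal_left {Z X Y : C} (h : IsDirSum Z X Y)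
    (hZ : P.leftOrthogonal Z) : P.leftOrthogonal X := by
  intro W f hW
  obtain ⟨i₁, -, p₁, -, hi₁, -⟩ := h
  calc f = i₁ ≫ (p₁ ≫ f) := by rw [← Category.assoc, hi₁, Category.id_comp]
    _ = 0 := by rw [hZ (p₁ ≫ f) hW, comp_zero]

variable [HasShift C ℤ]

lemma leftOrthogonal_shift_one (hP : ∀ Y, P Y → P (Y⟦(-1 : ℤ)⟧)) {X : C}
    (hX : P.leftOrthogonal X) : P.leftOrthogonal (X⟦(1 : ℤ)⟧) := by
  intro Y f hY
  obtain ⟨g, rfl⟩ := ((shiftEquiv C (1 : ℤ)).toAdjunction.homEquiv _ _).symm.surjective f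
  rw [Adjunction.homEquiv_counit, hX g (hP Y hY), Functor.map_zero, zero_comp]
  rfl

lemma leftOrthogonal_shift_of_le (hP : ∀ Y, P Y → P (Y⟦(-1 : ℤ)⟧)) {X : C} {a b : ℤ}
    (hab : a ≤ b) (hX : P.leftOrthogonal (X⟦a⟧)) : P.leftOrthogonal (X⟦b⟧) := by
  induction b, hab using Int.leInduction with
  | base => exact hX
  | succ b _ ih =>
    exact P.leftOrthogonal.prop_of_iso ((shiftFunctorAdd' C b 1 (b + 1) rfl).app X).symm
      (leftOrthogonal_shift_one hP ih)

end Orthogonal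

section Generation

variable {C : Type u} [Category.{v} C] [Preadditive C]
  {P : ObjectProperty C} [P.IsClosedUnderIsomorphisms] [P.ContainsZero]

lemma prop_of_mem_addClos {A : Set C} (hA : ∀ X ∈ A, P X)
    (hsum : ∀ {Z X Y : C}, IsDirSum Z X Y → P X → P Y → P Z) {X : C} (hX : addClos C A X) :
    P X := by
  induction hX with
  | of e hY => exact P.prop_of_iso e.symm (hA _ hY)
  | zero hX => exact P.prop_of_isZero hX
  | dirSum _ _ h ihX ihY => exact hsum h ihX ihY

variable [HasZeroObject C] [HasShift C ℤ] [∀ n : ℤ, (shiftFunctor C n).Additive]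
  [Pretriangulated C] [P.IsTriangulatedClosed₂]

lemma prop_of_mem_coprodN {A : Set C} (hA : ∀ X ∈ A, P X)
    (hsum : ∀ {Z X Y : C}, IsDirSum Z X Y → P X → P Y → P Z) :
    ∀ (n : ℕ), ∀ X ∈ coprodN C A n, P X
  | 0, _, hX => P.prop_of_isZero hX
  | 1, _, hX => prop_of_mem_addClos hA hsum hX
  | n + 2, _, ⟨_, _, _, _, _, hX, hY, hT⟩ =>
    P.ext_of_isTriangulatedClosed₂ _ hT (prop_of_mem_addClos hA hsum hX)
      (prop_of_mem_coprodN hA hsum (n + 1) _ hY)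

lemma prop_of_mem_gen {G : C} {I : Set ℤ} (hG : ∀ X ∈ shiftsOf C G I, P X)
    (hsum : ∀ {Z X Y : C}, IsDirSum Z X Y → P X → P Y → P Z)
    (hsmd : ∀ {Z X Y : C}, IsDirSum Z X Y → P Z → P X) :
    ∀ X ∈ gen C G I, P X := by
  rintro X ⟨n, Z, Y, hZ, h⟩
  exact hsmd h (prop_of_mem_coprodN hG hsum (n + 1) Z hZ)

end Generation

section TStructure

variable {C : Type u} [Category.{v} C] [HasZeroObject C] [HasShift C ℤ]
  [Preadditive C] [∀ n : ℤ, (shiftFunctor C n).Additive] [Pretriangulated C]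

abbrev TStructure.geLeftOrthogonal (T : TStructure C) : ObjectProperty C :=
  leftOrthogonal (· ∈ T.ge)

lemma TStructure.shift_mem_geLeftOrthogonal (T : TStructure C) {X : C} (hX : X ∈ T.le) :
    T.geLeftOrthogonal (X⟦(1 : ℤ)⟧) :=
  fun Y f hY => T.hom_zero X hX Y hY f

lemma TStructure.mem_le_of_geLeftOrthogonal (T : TStructure C) {X : C}
    (hX : T.geLeftOrthogonal X) : X ∈ T.le := by
  obtain ⟨A, B, hA, hB, f, g, h, hT⟩ := T.triangle X
  have : IsZero B := by
    obtain ⟨r, hr⟩ := Triangle.yoneda_exact₃ _ hT (𝟙 B)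
      (by change g ≫ 𝟙 B = 0; rw [hX g hB, zero_comp])
    have hr0 : r = 0 := T.hom_zero _ (T.le_shift A hA) B hB r
    rw [IsZero.iff_id_eq_zero, hr, hr0, comp_zero]
    rfl
  have : IsIso f := (Triangle.isZero₃_iff_isIso₁ _ hT).mp this
  exact T.le_iso (asIso f) (T.le_shift A hA)

lemma TStructure.geLeftOrthogonal_of_mem_gen (T : TStructure C) {G : C} {I : Set ℤ}
    (hG : ∀ X ∈ shiftsOf C G I, T.geLeftOrthogonal X) :
    ∀ X ∈ gen C G I, T.geLeftOrthogonal X :=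
  prop_of_mem_gen hG IsDirSum.leftOrthogonal IsDirSum.leftOrthogonal_left

end TStructure

/-- Every bounded above t-structure is extendable with respect to the
`G`-good metric `{⟨G⟩^{(-∞,-n]}}ₙ` : there is `r ∈ ℕ` with `⟨G⟩^{(-∞,-r]} ⊆ 𝒮^{≤0}`. -/
theorem bounded_above_tstructure_extendable
    (C : Type u) [Category.{v} C] [HasZeroObject C] [HasShift C ℤ]
    [Preadditive C] [∀ n : ℤ, (shiftFunctor C n).Additive] [Pretriangulated C]
    (G : C) (T : TStructure C) (hT : T.BoundedAbove) :
    ∃ r : ℕ, gen C G (Set.Iic (-(r : ℤ))) ⊆ T.le := by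
  obtain ⟨n, hn⟩ := hT G
  have hG : T.geLeftOrthogonal (G⟦(n + 1 : ℤ)⟧) :=
    T.geLeftOrthogonal.prop_of_iso ((shiftFunctorAdd' C (n : ℤ) 1 _ rfl).app G).symm
      (T.shift_mem_geLeftOrthogonal hn)
  refine ⟨n + 1, fun X hX =>
    T.mem_le_of_geLeftOrthogonal (T.geLeftOrthogonal_of_mem_gen ?_ X hX)⟩
  rintro W ⟨i, hi, ⟨e⟩⟩
  refine T.geLeftOrthogonal.prop_of_iso e.symm (leftOrthogonal_shift_of_le T.ge_shift ?_ hG)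
  simp only [Set.mem_Iic] at hi
  omega

end Paper
end

section
/- Let 𝒮 be an essentially small triangulated category with a good metric ℳ, and let (𝒮^{≤0}, 𝒮^{≥0}) be a t-structure on 𝒮 that is extendable with respect to ℳ (i.e. ℳ_k ⊆ 𝒮^{≤0} for some k ∈ ℕ). Let ℛ be any full subcategory of 𝒮^{≥0}. Then the essential image of ℛ under the Yoneda functor equals 𝔖(ℛ): (i) 𝔶(X) ∈ 𝔖(ℛ) for every X ∈ ℛ, and (ii) every F ∈ 𝔖(ℛ) is isomorphic in 𝒮-Mod to 𝔶(X) for some X ∈ ℛ. -/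
open CategoryTheory Limits Pretriangulated

universe v u

namespace Paper

variable (C : Type u) [Category.{v} C] [HasZeroObject C] [HasShift C ℤ]
  [Preadditive C] [∀ n : ℤ, (shiftFunctor C n).Additive] [Pretriangulated C]

variable {C}

variable (C)

variable {C}

section Completion

variable (C : Type) [SmallCategory C] [HasZeroObject C] [HasShift C ℤ]
  [Preadditive C] [∀ n : ℤ, (shiftFunctor C n).Additive] [Pretriangulated C]

/-- `F ∈ 𝔏(𝒜)` : `F` is a colimit in `𝒮-Mod` of the Yoneda image of a Cauchy
sequence (with respect to the metric `M`) whose terms lie in `𝒜`. -/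
noncomputable def memL (M : ℕ → Set C) (A : Set C) (F : Cᵒᵖ ⥤ AddCommGrpCat) : Prop :=
  ∃ c : Chain C, c.IsCauchy M ∧ (∀ n, c.X n ∈ A) ∧
    Nonempty (F ≅ colimit (Functor.ofSequence c.f ⋙ preadditiveYoneda))

/-- `F ∈ 𝔠(𝒮)` : `F` vanishes on `ℳⱼ` for some `j`. -/
def memC (M : ℕ → Set C) (F : Cᵒᵖ ⥤ AddCommGrpCat) : Prop :=
  ∃ j : ℕ, ∀ W ∈ M j, IsZero (F.obj (Opposite.op W))

/-- `F ∈ 𝔖(𝒜) := 𝔏(𝒜) ∩ 𝔠(𝒮)`. -/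
noncomputable def memS (M : ℕ → Set C) (A : Set C) (F : Cᵒᵖ ⥤ AddCommGrpCat) : Prop :=
  memL C M A F ∧ memC C M F

end Completion

/-!
For `X ∈ 𝒮^{≥0}` the functor `𝔶(X)` vanishes on `ℳ_{k+1}`, because `ℳ_{k+1}[-1] ⊆ ℳ_k ⊆ 𝒮^{≤0}`;
with the constant Cauchy sequence at `X` this puts `𝔶(X)` in `𝔖(ℛ)`. Conversely let
`F = colim 𝔶(X_n)`, with `X_n ∈ ℛ`, vanish on `ℳ_j`. From some `N` on, the cones `Z_n` of
`f_n : X_n → X_{n+1}` lie in `ℳ_{k+2} ∩ ℳ_j`, so the connecting maps `Z_n → X_n[1]` vanish: each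
`f_n` is a monomorphism and `X_{n+1} → Z_n` has a section `s`. The image of `s` in `F(Z_n) = 0`
is zero, so `s` dies at a finite stage `X_m`; as `X_{n+1} → X_m` is a monomorphism, `s = 0` and
hence `Z_n = 0`. Thus the sequence is constant up to isomorphism from `N` on and `F ≅ 𝔶(X_N)`.
-/

end Paper

namespace CategoryTheory

lemma Functor.map_homOfLE_mem_of_succ {D : Type*} [Category D] (W : MorphismProperty D)
    [W.IsMultiplicative] (G : ℕ ⥤ D) {N : ℕ}
    (hG : ∀ n, N ≤ n → W (G.map (homOfLE (Nat.le_add_right n 1))))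
    {n m : ℕ} (hNn : N ≤ n) (hnm : n ≤ m) : W (G.map (homOfLE hnm)) := by
  induction m, hnm using Nat.le_induction with
  | base => simpa only [homOfLE_refl, G.map_id] using W.id_mem (G.obj n)
  | succ m hnm ih =>
    rw [← homOfLE_comp hnm (Nat.le_add_right m 1), G.map_comp]
    exact W.comp_mem _ _ ih (hG m (hNn.trans hnm))

lemma Functor.isEventuallyConstantFrom_ofSequence_comp {D E : Type*} [Category D] [Category E]
    {X : ℕ → D} (f : ∀ n, X n ⟶ X (n + 1)) (Φ : D ⥤ E) {N : ℕ}
    (hf : ∀ n, N ≤ n → IsIso (f n)) : (Functor.ofSequence f ⋙ Φ).IsEventuallyConstantFrom N :=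
  fun j φ => (Functor.ofSequence f ⋙ Φ).map_homOfLE_mem_of_succ (MorphismProperty.isomorphisms E)
    (fun n hn => by
      simp only [Functor.comp_map, Functor.ofSequence_map_homOfLE_succ]
      have := hf n hn
      exact Φ.map_isIso (f n)) le_rfl (leOfHom φ)

lemma AddCommGrpCat.exists_map_eq_zero_of_ι_eq_zero {J : Type u} [SmallCategory J] [IsFiltered J]
    (G : J ⥤ AddCommGrpCat.{u}) {j : J} (x : G.obj j) (hx : colimit.ι G j x = 0) :
    ∃ (j' : J) (φ : j ⟶ j'), G.map φ x = 0 := by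
  rw [show (0 : ToType (colimit G)) = colimit.ι G j 0 by simp,
    Concrete.colimit_rep_eq_iff_exists] at hx
  obtain ⟨j', φ, _, h⟩ := hx
  exact ⟨j', φ, h.trans (map_zero _)⟩

section Triangulated

variable {C : Type*} [Category C] [HasZeroObject C] [HasShift C ℤ] [Preadditive C]
  [∀ n : ℤ, (CategoryTheory.shiftFunctor C n).Additive] [Pretriangulated C]

lemma Pretriangulated.Triangle.isIso₁_of_mor₃_eq_zero (T : Triangle C) (hT : T ∈ distTriang C)
    (h₃ : T.mor₃ = 0) (h : ∀ s : T.obj₃ ⟶ T.obj₂, s = 0) : IsIso T.mor₁ := by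
  obtain ⟨s, hs⟩ := T.coyoneda_exact₃ hT (𝟙 T.obj₃) (by rw [h₃, comp_zero])
  rw [← T.isZero₃_iff_isIso₁ hT, IsZero.iff_id_eq_zero, hs, h s, zero_comp]

end Triangulated

end CategoryTheory

namespace Paper

variable {C : Type u} [Category.{v} C] [HasZeroObject C] [HasShift C ℤ]
  [Preadditive C] [∀ n : ℤ, (shiftFunctor C n).Additive] [Pretriangulated C]

lemma IsGoodMetric.antitone {M : ℕ → Set C} (hM : IsGoodMetric M) : Antitone M :=
  antitone_nat_of_succ_le hM.mono

lemma TStructure.hom_eq_zero_of_shift_mem_le (T : TStructure C) {W Y : C}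
    (hW : (W⟦(-1 : ℤ)⟧ : C) ∈ T.le) (hY : Y ∈ T.ge) (f : W ⟶ Y) : f = 0 := by
  rw [← cancel_epi (shiftNegShift W (1 : ℤ)).hom, comp_zero]
  exact T.hom_zero _ hW Y hY _

lemma TStructure.hom_shift_eq_zero_of_shift_mem_le (T : TStructure C) {W Y : C}
    (hW : (W⟦(-1 : ℤ)⟧⟦(-1 : ℤ)⟧ : C) ∈ T.le) (hY : Y ∈ T.ge) (f : W ⟶ Y⟦(1 : ℤ)⟧) : f = 0 :=
  (shiftFunctor C (-1 : ℤ)).map_injective <| by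
    rw [Functor.map_zero, ← cancel_mono (shiftShiftNeg Y (1 : ℤ)).hom, zero_comp]
    exact T.hom_eq_zero_of_shift_mem_le hW hY _

section Orthogonality

variable {M : ℕ → Set C} (hM : IsGoodMetric M) {T : TStructure C} {k : ℕ} (hk : M k ⊆ T.le)
include hM hk

lemma IsGoodMetric.hom_eq_zero {W Y : C} (hW : W ∈ M (k + 1)) (hY : Y ∈ T.ge) (f : W ⟶ Y) :
    f = 0 :=
  T.hom_eq_zero_of_shift_mem_le (hk (hM.shift_neg k W hW)) hY f

lemma IsGoodMetric.hom_shift_eq_zero {W Y : C} (hW : W ∈ M (k + 2)) (hY : Y ∈ T.ge)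
    (f : W ⟶ Y⟦(1 : ℤ)⟧) : f = 0 :=
  T.hom_shift_eq_zero_of_shift_mem_le (hk (hM.shift_neg k _ (hM.shift_neg (k + 1) W hW))) hY f

end Orthogonality

open Opposite ZeroObject

section Chain

variable {C : Type} [SmallCategory C] [Preadditive C]

noncomputable def Chain.colimitYonedaIso (c : Chain C) {N : ℕ} (hf : ∀ n, N ≤ n → IsIso (c.f n)) :
    colimit (Functor.ofSequence c.f ⋙ preadditiveYoneda) ≅ preadditiveYoneda.obj (c.X N) :=
  colimit.isoColimitCocone
    ⟨_, (Functor.isEventuallyConstantFrom_ofSequence_comp c.f preadditiveYoneda hf).isColimitCocone⟩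

lemma Chain.eq_zero_of_isZero_colimit_obj (c : Chain C) {N : ℕ} (hf : ∀ n, N ≤ n → Mono (c.f n))
    {Z : C} (hZ : IsZero ((colimit (Functor.ofSequence c.f ⋙ preadditiveYoneda)).obj (op Z)))
    {n : ℕ} (hn : N ≤ n) (s : Z ⟶ c.X n) : s = 0 := by
  let G :=
    (Functor.ofSequence c.f ⋙ preadditiveYoneda) ⋙ (evaluation Cᵒᵖ AddCommGrpCat).obj (op Z)
  have hG : IsZero (colimit G) := hZ.of_iso (colimitObjIsoColimitCompEvaluation _ _).symm
  obtain ⟨m, φ, hφ⟩ := AddCommGrpCat.exists_map_eq_zero_of_ι_eq_zero G (s : G.obj n)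
    (by rw [hG.eq_of_tgt (colimit.ι G n) 0]; rfl)
  have : Mono ((Functor.ofSequence c.f).map φ) :=
    (Functor.ofSequence c.f).map_homOfLE_mem_of_succ (MorphismProperty.monomorphisms C)
      (fun n hn => by rw [Functor.ofSequence_map_homOfLE_succ]; exact hf n hn) hn (leOfHom φ)
  exact this.right_cancellation s 0 (hφ.trans zero_comp.symm)

end Chain

section Extendable

variable {C : Type} [SmallCategory C] [HasZeroObject C] [HasShift C ℤ]
  [Preadditive C] [∀ n : ℤ, (shiftFunctor C n).Additive] [Pretriangulated C]

def Chain.const (X : C) : Chain C := ⟨fun _ => X, fun _ => 𝟙 X⟩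

variable {M : ℕ → Set C} (hM : IsGoodMetric M)
include hM

lemma Chain.const_isCauchy (X : C) : (Chain.const X).IsCauchy M :=
  fun i => ⟨0, fun _ _ =>
    ⟨0, ⟨0, 0, contractible_distinguished X⟩, hM.zero_mem i 0 (isZero_zero C)⟩⟩

lemma memL_yoneda {A : Set C} {X : C} (hX : X ∈ A) : memL C M A (preadditiveYoneda.obj X) :=
  ⟨Chain.const X, Chain.const_isCauchy hM X, fun _ => hX,
    ⟨((Chain.const X).colimitYonedaIso (N := 0) fun _ _ => IsIso.id X).symm⟩⟩

variable {T : TStructure C} {k : ℕ} (hk : M k ⊆ T.le)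
include hk

lemma memC_yoneda {X : C} (hX : X ∈ T.ge) : memC C M (preadditiveYoneda.obj X) :=
  ⟨k + 1, fun _ hW => @AddCommGrpCat.isZero_of_subsingleton _
    ⟨fun a b => (hM.hom_eq_zero hk hW hX a).trans (hM.hom_eq_zero hk hW hX b).symm⟩⟩

lemma exists_iso_yoneda_of_memS {R : Set C} (hR : R ⊆ T.ge) {F : Cᵒᵖ ⥤ AddCommGrpCat}
    (hF : memS C M R F) : ∃ X ∈ R, Nonempty (F ≅ preadditiveYoneda.obj X) := by
  obtain ⟨⟨c, hc, hcR, ⟨e⟩⟩, j, hFj⟩ := hF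
  obtain ⟨N, hN⟩ := hc (max (k + 2) j)
  have hcone : ∀ n, N ≤ n → ∃ (Z : C) (g : c.X (n + 1) ⟶ Z),
      Triangle.mk (c.f n) g 0 ∈ distTriang C ∧ Z ∈ M j := by
    intro n hn
    obtain ⟨Z, ⟨g, h, hT⟩, hZ⟩ := hN n hn
    obtain rfl := hM.hom_shift_eq_zero hk (hM.antitone (le_max_left _ _) hZ) (hR (hcR n)) h
    exact ⟨Z, g, hT, hM.antitone (le_max_right _ _) hZ⟩
  have hmono : ∀ n, N ≤ n → Mono (c.f n) := fun n hn => by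
    obtain ⟨Z, g, hT, -⟩ := hcone n hn
    exact Triangle.mono₁ _ hT rfl
  have hiso : ∀ n, N ≤ n → IsIso (c.f n) := fun n hn => by
    obtain ⟨Z, g, hT, hZ⟩ := hcone n hn
    have hFZ : IsZero ((colimit (Functor.ofSequence c.f ⋙ preadditiveYoneda)).obj (op Z)) :=
      (hFj Z hZ).of_iso (e.app (op Z)).symm
    exact Triangle.isIso₁_of_mor₃_eq_zero _ hT rfl
      fun s => c.eq_zero_of_isZero_colimit_obj hmono hFZ (hn.trans n.le_succ) s
  exact ⟨c.X N, hcR N, ⟨e ≪≫ c.colimitYonedaIso hiso⟩⟩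

end Extendable

/-- (Lifting, part of Theorem ET.)  Let `(𝒮^{≤0}, 𝒮^{≥0})` be a
t-structure on `𝒮` extendable with respect to a good metric `M`, and let `ℛ ⊆ 𝒮^{≥0}` be
any full subcategory.  Then the essential image of `ℛ` under the Yoneda functor equals
`𝔖(ℛ)`. -/
theorem yoneda_image_eq_S_of_extendable
    (C : Type) [SmallCategory C] [HasZeroObject C] [HasShift C ℤ]
    [Preadditive C] [∀ n : ℤ, (shiftFunctor C n).Additive] [Pretriangulated C]
    (M : ℕ → Set C) (hM : IsGoodMetric M)
    (T : TStructure C) (hext : ∃ k : ℕ, M k ⊆ T.le)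
    (R : Set C) (hR : R ⊆ T.ge) :
    (∀ X ∈ R, memS C M R (preadditiveYoneda.obj X)) ∧
    (∀ F : Cᵒᵖ ⥤ AddCommGrpCat, memS C M R F → ∃ X ∈ R, Nonempty (F ≅ preadditiveYoneda.obj X)) := by
  obtain ⟨k, hk⟩ := hext
  exact ⟨fun X hX => ⟨memL_yoneda hM hX, memC_yoneda hM hk (hR hX)⟩,
    fun F hF => exists_iso_yoneda_of_memS hM hk hR hF⟩

end Paper
end

section
/- Let 𝒮 be an essentially small triangulated category with a t-structure (𝒮^{≤0}, 𝒮^{≥0}) and a good metric ℳ that is equivalent to the good metric {𝒮^{≤-n}}_{n∈ℕ} (for every n there exist a, b ∈ ℕ with ℳ_a ⊆ 𝒮^{≤-n} and 𝒮^{≤-b} ⊆ ℳ_n). Then the Yoneda functor restricts to an equivalence from 𝒮^{+} := ⋃_n 𝒮^{≥-n} onto the completion 𝔖(𝒮): 𝔶(X) ∈ 𝔖(𝒮) for every X ∈ 𝒮^{+}, and every F ∈ 𝔖(𝒮) is isomorphic in 𝒮-Mod to 𝔶(X) for some X ∈ 𝒮^{+}. In particular, if the t-structure is bounded below, then 𝔶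 induces an equivalence 𝒮 ≃ 𝔖(𝒮). -/
open CategoryTheory Limits Pretriangulated

universe v u

namespace Paper

variable (C : Type u) [Category.{v} C] [HasZeroObject C] [HasShift C ℤ]
  [Preadditive C] [∀ n : ℤ, (shiftFunctor C n).Additive] [Pretriangulated C]

variable {C}

variable (C)

variable {C}

/-!
Write `t` for the t-structure in Mathlib's indexing (`t.le n X ↔ X⟦n⟧ ∈ 𝒮^{≤0}`). For
`X ∈ 𝒮^{≥-n}`, `𝔶 X` is the colimit of the constant Cauchy sequence at `X`, and it vanishes on
`ℳ_a ⊆ 𝒮^{≤-n-1}`.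

Conversely, let `F = colim 𝔶 (X_m)` vanish on `ℳ_j ⊇ 𝒮^{≤-b}`, and put `k = 1 - b`. From some `N`
on, the cones of `X_m ⟶ X_{m+1}` lie in `ℳ_a ⊆ 𝒮^{≤k-2}`, so the truncations `τ^{≥k} X_m` are all
isomorphic and the maps `X_N ⟶ τ^{≥k} X_N` extend to a cocone `X_m ⟶ τ^{≥k} X_N`. Its image under
`𝔶` is a colimit cocone because `F` kills the objects `τ^{<k} X_m ∈ 𝒮^{≤-b}`: the map
`X_N ⟶ X_m` eventually factors through `τ^{≥k} X_N`, which splits the cocone, and a morphism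
`W ⟶ X_m` killed by the cocone factors through `τ^{<k} X_m`, hence dies in the colimit.
-/

section Sequences

variable {C : Type u} [Category.{v} C]

def coconeOfSequence {X : ℕ → C} (f : ∀ n, X n ⟶ X (n + 1)) {Y : C} (g : ∀ n, X n ⟶ Y)
    (hg : ∀ n, f n ≫ g (n + 1) = g n) : Cocone (Functor.ofSequence f) where
  pt := Y
  ι := NatTrans.ofSequence g fun n => by
    rw [Functor.ofSequence_map_homOfLE_succ, Functor.const_obj_map]
    exact (hg n).trans (Category.comp_id _).symm

lemma ofSequence_map_comp_eq {X : ℕ → C} (f : ∀ n, X n ⟶ X (n + 1)) {Y : C} (g : ∀ n, X n ⟶ Y)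
    (hg : ∀ n, f n ≫ g (n + 1) = g n) (i j : ℕ) (h : i ≤ j) :
    Functor.OfSequence.map f i j h ≫ g j = g i :=
  (coconeOfSequence f g hg).w (homOfLE h)

open Functor.OfSequence in
lemma exists_cocone_ofSequence {X : ℕ → C} (f : ∀ n, X n ⟶ X (n + 1)) {Y : C} {N : ℕ}
    (g₀ : X N ⟶ Y) (hext : ∀ n, N ≤ n → ∀ φ : X n ⟶ Y, ∃ ψ : X (n + 1) ⟶ Y, f n ≫ ψ = φ) :
    ∃ g : ∀ n, X n ⟶ Y, (∀ n, f n ≫ g (n + 1) = g n) ∧ g N = g₀ := by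
  choose ext hext using hext
  let g : ∀ n, X n ⟶ Y := fun n => Nat.rec (map f 0 N N.zero_le ≫ g₀)
    (fun k gk => if h : N ≤ k then ext k h gk else map f (k + 1) N (by lia) ≫ g₀) n
  have g_of_le : ∀ n (h : n ≤ N), g n = map f n N h ≫ g₀
    | 0, _ => rfl
    | k + 1, h => dif_neg (by lia)
  refine ⟨g, fun n => ?_, by rw [g_of_le N le_rfl, map_id, Category.id_comp]⟩
  by_cases h : N ≤ n
  · exact (congrArg (f n ≫ ·) (dif_pos h)).trans (hext n h (g n))
  · rw [g_of_le (n + 1) (by lia), g_of_le n (by lia), ← map_le_succ f n,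
      ← map_comp_assoc f n (n + 1) N n.le_succ (by lia)]

end Sequences

section Truncation

variable {C : Type u} [Category.{v} C] [HasZeroObject C] [HasShift C ℤ]
  [Preadditive C] [∀ n : ℤ, (shiftFunctor C n).Additive] [Pretriangulated C]

def TStructure.toTriangulated (T : TStructure C) : Triangulated.TStructure C where
  le n X := (X⟦n⟧ : C) ∈ T.le
  ge n X := (X⟦n⟧ : C) ∈ T.ge
  le_isClosedUnderIsomorphisms n := ⟨fun e hX => T.le_iso ((shiftFunctor C n).mapIso e) hX⟩
  ge_isClosedUnderIsomorphisms n := ⟨fun e hX => T.ge_iso ((shiftFunctor C n).mapIso e) hX⟩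
  le_shift n a n' h X hX := T.le_iso ((shiftFunctorAdd' C a n' n h).app X) hX
  ge_shift n a n' h X hX := T.ge_iso ((shiftFunctorAdd' C a n' n h).app X) hX
  zero' X Y f hX hY := by
    apply (shiftFunctor C (0 : ℤ)).map_injective
    apply (shiftFunctor C (1 : ℤ)).map_injective
    rw [CategoryTheory.Functor.map_zero, CategoryTheory.Functor.map_zero]
    exact T.hom_zero _ hX _ (T.ge_iso ((shiftFunctorAdd' C 0 1 1 (by simp)).app Y) hY) _
  le_zero_le X hX := T.le_iso ((shiftFunctorAdd' C 0 1 1 (by simp)).symm.app X) (T.le_shift _ hX)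
  ge_one_le Y hY :=
    T.ge_iso ((shiftFunctorAdd' C 1 (-1) 0 (by simp)).symm.app Y) (T.ge_shift _ hY)
  exists_triangle_zero_one A := by
    obtain ⟨X, Y, hX, hY, f, g, h, mem⟩ := T.triangle (A⟦(1 : ℤ)⟧)
    have hS := Triangle.shift_distinguished _ mem (-1)
    set T' := (shiftFunctor (Triangle C) (-1 : ℤ)).obj (Triangle.mk f g h)
    have e : T'.obj₂ ≅ A := (shiftFunctorCompIsoId C 1 (-1) (by simp)).app A
    have hT' : Triangle.mk (T'.mor₁ ≫ e.hom) (e.inv ≫ T'.mor₂) T'.mor₃ ∈ distTriang C :=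
      isomorphic_distinguished _ hS _ (Triangle.isoMk _ _ (Iso.refl _) e.symm (Iso.refl _)
        (by simp [Triangle.mk]) (by simp [Triangle.mk]) (by simp [Triangle.mk]))
    exact ⟨_, _, T.le_iso ((shiftFunctorCompIsoId C 1 (-1) (by simp)).symm.app X ≪≫
        (shiftFunctorZero C ℤ).symm.app _) hX,
      T.ge_iso ((shiftFunctorCompIsoId C (-1) 1 (by simp)).symm.app Y) hY, _, _, _, hT'⟩

lemma _root_.CategoryTheory.Triangulated.TStructure.exists_comp_eq_of_isLE_of_isGE
    (t : Triangulated.TStructure C) {X Y Z : C} {f : X ⟶ Y} {g : Y ⟶ Z}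
    {h : Z ⟶ X⟦(1 : ℤ)⟧} (hT : Triangle.mk f g h ∈ distTriang C) {k : ℤ} (hZ : t.IsLE Z (k - 2))
    {W : C} [t.IsGE W k] (φ : X ⟶ W) : ∃ ψ : Y ⟶ W, f ≫ ψ = φ := by
  obtain ⟨ψ, hψ⟩ := Triangle.yoneda_exact₂ _ (inv_rot_of_distTriang _ hT) φ
    (t.zero_of_isLE_of_isGE _ (k - 1) k (by lia) (t.isLE_shift Z (k - 2) (-1) (k - 1))
      inferInstance)
  exact ⟨ψ, hψ.symm⟩

lemma _root_.CategoryTheory.Triangulated.TStructure.isIso_truncGE_map_of_isLE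
    (t : Triangulated.TStructure C) {X Y Z : C} {f : X ⟶ Y} {g : Y ⟶ Z} {h : Z ⟶ X⟦(1 : ℤ)⟧}
    (hT : Triangle.mk f g h ∈ distTriang C) (k : ℤ) (hZ : t.IsLE Z (k - 2)) :
    IsIso ((t.truncGE k).map f) := by
  obtain ⟨r, hr⟩ := t.exists_comp_eq_of_isLE_of_isGE hT hZ ((t.truncGEπ k).app X)
  have hf : ∀ d : Y ⟶ (t.truncGE k).obj Y, f ≫ d = 0 → d = 0 := fun d hd => by
    obtain ⟨e, rfl⟩ : ∃ e : Z ⟶ (t.truncGE k).obj Y, d = g ≫ e := Triangle.yoneda_exact₂ _ hT d hd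
    simp [t.zero_of_isLE_of_isGE e (k - 2) k (by lia) hZ inferInstance]
  have hr' : r ≫ (t.truncGE k).map f = (t.truncGEπ k).app Y :=
    sub_eq_zero.1 (hf _ (by simp [reassoc_of% hr]))
  exact ⟨t.descTruncGE r k, t.from_truncGE_obj_ext (by simp [hr]),
    t.from_truncGE_obj_ext (by simp [hr'])⟩

lemma _root_.CategoryTheory.Triangulated.TStructure.isIso_truncGE_map_ofSequence
    (t : Triangulated.TStructure C) {X : ℕ → C} (f : ∀ n, X n ⟶ X (n + 1)) {N : ℕ} {k : ℤ}
    (hcone : ∀ m, N ≤ m → ∃ Z, IsConeOf C Z (f m) ∧ t.IsLE Z (k - 2)) (m : ℕ) (hm : N ≤ m) :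
    IsIso ((t.truncGE k).map (Functor.OfSequence.map f N m hm)) := by
  induction m, hm using Nat.le_induction with
  | base =>
    rw [Functor.OfSequence.map_id, CategoryTheory.Functor.map_id]
    infer_instance
  | succ m hm ih =>
    obtain ⟨Z, ⟨g, h, hT⟩, hZ⟩ := hcone m hm
    have := t.isIso_truncGE_map_of_isLE hT k hZ
    rw [Functor.OfSequence.map_comp f N m (m + 1) hm m.le_succ, Functor.OfSequence.map_le_succ,
      CategoryTheory.Functor.map_comp]
    infer_instance

lemma _root_.CategoryTheory.Triangulated.TStructure.isIso_descTruncGE_of_cocone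
    (t : Triangulated.TStructure C) {X : ℕ → C} (f : ∀ n, X n ⟶ X (n + 1)) {N : ℕ} {k : ℤ}
    (hcone : ∀ m, N ≤ m → ∃ Z, IsConeOf C Z (f m) ∧ t.IsLE Z (k - 2))
    (ι : ∀ n, X n ⟶ (t.truncGE k).obj (X N)) (hι : ∀ n, f n ≫ ι (n + 1) = ι n)
    (hιN : ι N = (t.truncGEπ k).app (X N)) (m : ℕ) (hm : N ≤ m) :
    IsIso (t.descTruncGE (ι m) k) := by
  have hε : (t.truncGE k).map (Functor.OfSequence.map f N m hm) ≫ t.descTruncGE (ι m) k = 𝟙 _ :=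
    t.from_truncGE_obj_ext (by
      erw [← Category.assoc, t.truncGEπ_naturality, Category.assoc, t.π_descTruncGE,
        ofSequence_map_comp_eq f ι hι N m hm, hιN, Category.comp_id])
  have := t.isIso_truncGE_map_ofSequence f hcone m hm
  have : IsIso ((t.truncGE k).map (Functor.OfSequence.map f N m hm) ≫ t.descTruncGE (ι m) k) := by
    rw [hε]; infer_instance
  exact IsIso.of_isIso_comp_left ((t.truncGE k).map (Functor.OfSequence.map f N m hm)) _

end Truncation

section YonedaColimit

variable {C : Type} [SmallCategory C] [Preadditive C] {J : Type} [SmallCategory J] [IsFiltered J]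
  {D : J ⥤ C}

noncomputable def isColimitPreadditiveYonedaMapCocone (c : Cocone D)
    (hsplit : ∃ (j : J) (ρ : c.pt ⟶ D.obj j), ρ ≫ c.ι.app j = 𝟙 c.pt)
    (hkilledish : ∀ {W : C} {j : J} (φ : W ⟶ D.obj j), φ ≫ c.ι.app j = 0 →
      ∃ (k : J) (g : j ⟶ k), φ ≫ D.map g = 0) :
    IsColimit (preadditiveYoneda.mapCocone c) :=
  evaluationJointlyReflectsColimits _ fun W =>
    have := reflectsColimit_of_reflectsIsomorphisms
      ((D ⋙ preadditiveYoneda) ⋙ (evaluation _ _).obj W) (forget AddCommGrpCat)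
    isColimitOfReflects (forget AddCommGrpCat) <| Types.FilteredColimit.isColimitOf' _ _
      (fun (x : W.unop ⟶ c.pt) => by
        obtain ⟨j, ρ, hρ⟩ := hsplit
        exact ⟨j, x ≫ ρ, (by simp [hρ] : x = (x ≫ ρ) ≫ c.ι.app j)⟩)
      (fun j (x y : W.unop ⟶ D.obj j) (hxy : x ≫ c.ι.app j = y ≫ c.ι.app j) => by
        obtain ⟨k, g, hg⟩ := hkilledish (x - y) (by simp [hxy])
        exact ⟨k, g, (sub_eq_zero.1 (by simpa using hg) : x ≫ D.map g = y ≫ D.map g)⟩)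

lemma exists_comp_map_eq_zero_of_isZero {W : C}
    (hW : IsZero ((colimit (D ⋙ preadditiveYoneda)).obj (Opposite.op W)))
    {j : J} (φ : W ⟶ D.obj j) : ∃ (k : J) (g : j ⟶ k), φ ≫ D.map g = 0 := by
  have := AddCommGrpCat.subsingleton_of_isZero hW
  obtain ⟨k, g, g', h⟩ := Concrete.isColimit_exists_of_rep_eq (i := j) (j := j) _
    (isColimitOfPreserves ((evaluation Cᵒᵖ AddCommGrpCat).obj (Opposite.op W))
      (colimit.isColimit (D ⋙ preadditiveYoneda)))
    (show W ⟶ D.obj j from φ) 0 (@Subsingleton.elim _ this _ _)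
  exact ⟨k, g, h.trans (map_zero _)⟩

end YonedaColimit

section Completion

variable {C : Type} [SmallCategory C] [HasZeroObject C] [HasShift C ℤ]
  [Preadditive C] [∀ n : ℤ, (shiftFunctor C n).Additive] [Pretriangulated C]

open ZeroObject in
lemma memL_preadditiveYoneda {M : ℕ → Set C} (hM : IsGoodMetric M) (X : C) :
    memL C M Set.univ (preadditiveYoneda.obj X) := by
  let s := coconeOfSequence (fun _ => 𝟙 X) (fun _ => 𝟙 X) (fun _ => Category.id_comp _)
  have hs := isColimitPreadditiveYonedaMapCocone s ⟨0, 𝟙 X, Category.id_comp _⟩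
    (fun φ hφ => ⟨_, 𝟙 _, by rw [CategoryTheory.Functor.map_id]; exact hφ⟩)
  exact ⟨⟨fun _ => X, fun _ => 𝟙 X⟩,
    fun i => ⟨0, fun _ _ => ⟨0, ⟨0, 0, contractible_distinguished X⟩,
      hM.zero_mem i _ (isZero_zero C)⟩⟩,
    fun _ => trivial, ⟨hs.coconePointUniqueUpToIso (colimit.isColimit _)⟩⟩

lemma memC_preadditiveYoneda_of_isGE (t : Triangulated.TStructure C) {M : ℕ → Set C} {a : ℕ}
    {n : ℤ} (ha : ∀ W ∈ M a, t.IsLE W (n - 1)) (X : C) [t.IsGE X n] :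
    memC C M (preadditiveYoneda.obj X) := by
  refine ⟨a, fun W hW => ?_⟩
  have := ha W hW
  have : Subsingleton (W ⟶ X) := ⟨fun φ ψ => (t.zero φ (n - 1) n).trans (t.zero ψ (n - 1) n).symm⟩
  exact @AddCommGrpCat.isZero_of_subsingleton _ this

lemma exists_iso_preadditiveYoneda_truncGE (t : Triangulated.TStructure C) {X : ℕ → C}
    (f : ∀ n, X n ⟶ X (n + 1)) {N : ℕ} {k : ℤ}
    (hcone : ∀ m, N ≤ m → ∃ Z, IsConeOf C Z (f m) ∧ t.IsLE Z (k - 2))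
    (hkilledish : ∀ W, t.IsLE W (k - 1) →
      IsZero ((colimit (Functor.ofSequence f ⋙ preadditiveYoneda)).obj (Opposite.op W))) :
    Nonempty (colimit (Functor.ofSequence f ⋙ preadditiveYoneda) ≅
      preadditiveYoneda.obj ((t.truncGE k).obj (X N))) := by
  have truncLTι_dies (m : ℕ) : ∃ (m' : ℕ) (g : m ⟶ m'),
      (t.truncLTι k).app (X m) ≫ (Functor.ofSequence f).map g = 0 :=
    exists_comp_map_eq_zero_of_isZero (hkilledish _ inferInstance) _
  obtain ⟨ι, hι, hιN⟩ := exists_cocone_ofSequence f ((t.truncGEπ k).app (X N)) fun m hm φ => by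
    obtain ⟨Z, ⟨g, h, hT⟩, hZ⟩ := hcone m hm
    exact t.exists_comp_eq_of_isLE_of_isGE hT hZ φ
  have hsplit : ∃ (m : ℕ) (ρ : (t.truncGE k).obj (X N) ⟶ X m), ρ ≫ ι m = 𝟙 _ := by
    obtain ⟨m, g, hg⟩ := truncLTι_dies N
    obtain ⟨ρ, hρ⟩ : ∃ ρ : (t.truncGE k).obj (X N) ⟶ X m,
        Functor.OfSequence.map f N m (leOfHom g) = (t.truncGEπ k).app (X N) ≫ ρ :=
      Triangle.yoneda_exact₂ _ (t.triangleLTGE_distinguished k (X N)) _ hg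
    refine ⟨m, ρ, t.from_truncGE_obj_ext ?_⟩
    erw [← Category.assoc, ← hρ, ofSequence_map_comp_eq f ι hι, hιN, Category.comp_id]
  have hkilled {W : C} {m : ℕ} (φ : W ⟶ X m) (hφ : φ ≫ ι m = 0) :
      ∃ (m' : ℕ) (g : m ⟶ m'), φ ≫ Functor.OfSequence.map f m m' (leOfHom g) = 0 := by
    have hm₀ : N ≤ max m N := le_max_right _ _
    have := t.isIso_descTruncGE_of_cocone f hcone ι hι hιN (max m N) hm₀
    have h0 : (φ ≫ Functor.OfSequence.map f m (max m N) (le_max_left _ _)) ≫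
        (t.truncGEπ k).app (X (max m N)) = 0 := by
      rw [← cancel_mono (t.descTruncGE (ι (max m N)) k)]
      erw [Category.assoc, t.π_descTruncGE, Category.assoc, ofSequence_map_comp_eq f ι hι, hφ,
        zero_comp]
    obtain ⟨ψ, hψ⟩ := Triangle.coyoneda_exact₂ _ (t.triangleLTGE_distinguished k (X (max m N))) _ h0
    obtain ⟨m', g, hg⟩ := truncLTι_dies (max m N)
    refine ⟨m', homOfLE ((le_max_left _ _).trans (leOfHom g)), ?_⟩
    erw [Functor.OfSequence.map_comp f m (max m N) m' (le_max_left _ _) (leOfHom g),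
      ← Category.assoc, hψ, Category.assoc, hg, comp_zero]
  exact ⟨(colimit.isColimit _).coconePointUniqueUpToIso
    (isColimitPreadditiveYonedaMapCocone (coconeOfSequence f ι hι) hsplit hkilled)⟩

lemma memS_preadditiveYoneda {M : ℕ → Set C} (hM : IsGoodMetric M) (T : TStructure C)
    (hle : ∀ n : ℕ, ∃ a : ℕ, ∀ X ∈ M a, (X⟦(-(n : ℤ))⟧ : C) ∈ T.le) {X : C}
    (hX : ∃ n : ℕ, (X⟦(-(n : ℤ))⟧ : C) ∈ T.ge) : memS C M Set.univ (preadditiveYoneda.obj X) := by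
  obtain ⟨n, hn⟩ := hX
  obtain ⟨a, ha⟩ := hle (n + 1)
  let t := T.toTriangulated
  have : t.IsGE X (-n) := ⟨hn⟩
  refine ⟨memL_preadditiveYoneda hM X,
    memC_preadditiveYoneda_of_isGE t (a := a) (n := -n) (fun W hW => ?_) X⟩
  have : t.IsLE W (-((n + 1 : ℕ) : ℤ)) := ⟨ha W hW⟩
  exact t.isLE_of_le W (-((n + 1 : ℕ) : ℤ)) _ (by lia)

lemma exists_iso_preadditiveYoneda_of_memS {M : ℕ → Set C} (T : TStructure C)
    (hequiv : ∀ n : ℕ, (∃ a : ℕ, ∀ X ∈ M a, (X⟦(-(n : ℤ))⟧ : C) ∈ T.le) ∧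
      (∃ b : ℕ, ∀ X : C, (X⟦(-(b : ℤ))⟧ : C) ∈ T.le → X ∈ M n))
    {F : Cᵒᵖ ⥤ AddCommGrpCat} (hF : memS C M Set.univ F) :
    ∃ X : C, (∃ n : ℕ, (X⟦(-(n : ℤ))⟧ : C) ∈ T.ge) ∧ Nonempty (F ≅ preadditiveYoneda.obj X) := by
  obtain ⟨⟨c, hc, -, ⟨eF⟩⟩, j, hj⟩ := hF
  obtain ⟨b, hb⟩ := (hequiv j).2
  obtain ⟨a, ha⟩ := (hequiv (b + 1)).1
  obtain ⟨N, hN⟩ := hc a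
  let t := T.toTriangulated
  obtain ⟨e⟩ := exists_iso_preadditiveYoneda_truncGE t c.f (N := N) (k := 1 - b)
    (fun m hm => by
      obtain ⟨Z, hZ, hZM⟩ := hN m hm
      have : t.IsLE Z (-((b + 1 : ℕ) : ℤ)) := ⟨ha Z hZM⟩
      exact ⟨Z, hZ, t.isLE_of_le Z (-((b + 1 : ℕ) : ℤ)) _ (by lia)⟩)
    (fun W hW => (hj W (hb W (t.isLE_of_le W (1 - b - 1) (-(b : ℤ)) (by lia)).le)).of_iso
      (eF.app _).symm)
  exact ⟨_, ⟨b, (t.isGE_of_ge _ (-(b : ℤ)) (1 - b) (by lia)).ge⟩, ⟨eF ≪≫ e⟩⟩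

end Completion

/-- (Corollary `Unexpected`.)  If a good metric `M` on `𝒮` is equivalent
to the metric `{𝒮^{≤-n}}ₙ` induced by a t-structure `(𝒮^{≤0}, 𝒮^{≥0})`, then the Yoneda
functor restricts to an equivalence `𝒮⁺ ≃ 𝔖(𝒮)`; in particular, if the t-structure is
bounded below, `𝒮 ≃ 𝔖(𝒮)`. -/
theorem plus_part_equiv_completion
    (C : Type) [SmallCategory C] [HasZeroObject C] [HasShift C ℤ]
    [Preadditive C] [∀ n : ℤ, (shiftFunctor C n).Additive] [Pretriangulated C]
    (M : ℕ → Set C) (hM : IsGoodMetric M) (T : TStructure C)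
    (hequiv : ∀ n : ℕ, (∃ a : ℕ, ∀ X ∈ M a, (X⟦(-(n : ℤ))⟧ : C) ∈ T.le) ∧
      (∃ b : ℕ, ∀ X : C, (X⟦(-(b : ℤ))⟧ : C) ∈ T.le → X ∈ M n)) :
    ((∀ X : C, (∃ n : ℕ, (X⟦(-(n : ℤ))⟧ : C) ∈ T.ge) →
        memS C M Set.univ (preadditiveYoneda.obj X)) ∧
     (∀ F : Cᵒᵖ ⥤ AddCommGrpCat, memS C M Set.univ F →
        ∃ X : C, (∃ n : ℕ, (X⟦(-(n : ℤ))⟧ : C) ∈ T.ge) ∧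
          Nonempty (F ≅ preadditiveYoneda.obj X))) ∧
    (T.BoundedBelow →
      (∀ X : C, memS C M Set.univ (preadditiveYoneda.obj X)) ∧
      (∀ F : Cᵒᵖ ⥤ AddCommGrpCat, memS C M Set.univ F →
        ∃ X : C, Nonempty (F ≅ preadditiveYoneda.obj X))) := by
  have plus_to_completion (X : C) (hX : ∃ n : ℕ, (X⟦(-(n : ℤ))⟧ : C) ∈ T.ge) :=
    memS_preadditiveYoneda hM T (fun n => (hequiv n).1) hX
  have completion_to_plus (F : Cᵒᵖ ⥤ AddCommGrpCat) (hF : memS C M Set.univ F) :=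
    exists_iso_preadditiveYoneda_of_memS T hequiv hF
  exact ⟨⟨plus_to_completion, completion_to_plus⟩, fun hT =>
    ⟨fun X => plus_to_completion X (hT X),
      fun F hF => (completion_to_plus F hF).imp fun _ hX => hX.2⟩⟩

end Paper
end

section
/- Let 𝒮 be an essentially small triangulated category and G an object of 𝒮 such that there exists e ∈ ℕ with the property that every X ∈ 𝒮 satisfying Hom(X, G[j]) = 0 for all j ≤ -1 belongs to ⟨G⟩^{(-∞,e]} (i.e. fd(𝒮^op, G^op) < ∞). Then any two bounded t-structures on 𝒮 are equivalent. -/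
open CategoryTheory Limits Pretriangulated

universe v u

namespace Paper

variable (C : Type u) [Category.{v} C] [HasZeroObject C] [HasShift C ℤ]
  [Preadditive C] [∀ n : ℤ, (shiftFunctor C n).Additive] [Pretriangulated C]

variable {C}

variable (C)

variable {C}

/-! By boundedness, `G ∈ 𝒮₁^{≤a} ∩ 𝒮₁^{≥c}` for some `a, c`, and similarly for `𝒮₂`.
If `X ∈ 𝒮₁^{≤c}`, then `Hom(X, G[j]) = 0` for `j ≤ -1` because `G[j] ∈ 𝒮₁^{≥c+1}`, so
`fd(𝒮ᵒᵖ, Gᵒᵖ) ≤ e` puts `X` into `⟨G⟩^{(-∞,e]}`. Aisles are closed under extensions, finite sums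
and summands, hence `⟨G⟩^{(-∞,e]} ⊆ 𝒮₂^{≤a₂+e}`. Shifting gives `𝒮₁^{≤m} ⊆ 𝒮₂^{≤m-c₁+a₂+e}`
for all `m`, and symmetrically with the roles of the two t-structures exchanged. -/

structure IsClosedUnderSumsSummandsExtensions (S : Set C) : Prop where
  of_iso : ∀ ⦃X Y : C⦄, (X ≅ Y) → Y ∈ S → X ∈ S
  zero_mem : ∀ ⦃X : C⦄, IsZero X → X ∈ S
  dirSum_mem : ∀ ⦃Z X Y : C⦄, IsDirSum Z X Y → X ∈ S → Y ∈ S → Z ∈ S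
  summand_mem : ∀ ⦃Z X Y : C⦄, IsDirSum Z X Y → Z ∈ S → X ∈ S
  star_subset : star C S S ⊆ S

namespace IsClosedUnderSumsSummandsExtensions

variable {S A : Set C} (hS : IsClosedUnderSumsSummandsExtensions S)
include hS

lemma addClos_mem (hA : A ⊆ S) {X : C} (hX : addClos C A X) : X ∈ S := by
  induction hX with
  | of e hY => exact hS.of_iso e (hA hY)
  | zero hX => exact hS.zero_mem hX
  | dirSum _ _ h ihX ihY => exact hS.dirSum_mem h ihX ihY

lemma coprodN_subset (hA : A ⊆ S) : ∀ n : ℕ, coprodN C A n ⊆ S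
  | 0 => fun _ hX => hS.zero_mem hX
  | 1 => fun _ hX => hS.addClos_mem hA hX
  | n + 2 => by
    rintro Z ⟨X, Y, f, g, h, hX, hY, hT⟩
    exact hS.star_subset ⟨X, Y, f, g, h, hS.addClos_mem hA hX, coprodN_subset hA (n + 1) hY, hT⟩

lemma gen_subset {G : C} {I : Set ℤ} (hG : shiftsOf C G I ⊆ S) : gen C G I ⊆ S := by
  rintro X ⟨n, Z, Y, hZ, hXY⟩
  exact hS.summand_mem hXY (hS.coprodN_subset hG (n + 1) hZ)

end IsClosedUnderSumsSummandsExtensions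

lemma Triangle.distinguished_mk_comp_iso {X Y Z A : C} (f : X ⟶ Y) (g : Y ⟶ Z)
    (h : Z ⟶ X⟦(1 : ℤ)⟧) (hT : Triangle.mk f g h ∈ distTriang C) (e : Y ≅ A) :
    Triangle.mk (f ≫ e.hom) (e.inv ≫ g) h ∈ distTriang C :=
  isomorphic_distinguished _ hT _ <| by
    refine Triangle.isoMk _ _ (Iso.refl X) e.symm (Iso.refl Z) ?_ ?_ ?_
    · show (f ≫ e.hom) ≫ e.inv = 𝟙 X ≫ f
      simp
    · show (e.inv ≫ g) ≫ 𝟙 Z = e.inv ≫ g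
      simp
    · show h ≫ (𝟙 X)⟦(1 : ℤ)⟧' = 𝟙 Z ≫ h
      simp

namespace TStructure

variable (T : TStructure C)

/-- `le n` and `ge n` are `𝒮^{≤n}` and `𝒮^{≥n}`: `X ∈ 𝒮^{≤n}` iff `X[n] ∈ 𝒮^{≤0}`. -/
def toTriangulated_s9 : Triangulated.TStructure C where
  le n X := (X⟦n⟧ : C) ∈ T.le
  ge n X := (X⟦n⟧ : C) ∈ T.ge
  le_isClosedUnderIsomorphisms n := ⟨fun e hX => T.le_iso ((shiftFunctor C n).mapIso e) hX⟩
  ge_isClosedUnderIsomorphisms n := ⟨fun e hX => T.ge_iso ((shiftFunctor C n).mapIso e) hX⟩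
  le_shift n a n' h X hX := T.le_iso ((shiftFunctorAdd' C a n' n h).app X) hX
  ge_shift n a n' h X hX := T.ge_iso ((shiftFunctorAdd' C a n' n h).app X) hX
  zero' X Y f hX hY := by
    have e : ((X⟦(0 : ℤ)⟧)⟦(1 : ℤ)⟧ : C) ≅ X⟦(1 : ℤ)⟧ :=
      (shiftFunctorAdd' C 0 1 1 (zero_add 1)).symm.app X
    apply (shiftFunctor C (1 : ℤ)).map_injective
    rw [Functor.map_zero, ← cancel_epi e.hom, comp_zero]
    exact T.hom_zero _ hX _ hY _
  le_zero_le X hX :=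
    T.le_iso ((shiftFunctorAdd' C 0 1 1 (zero_add 1)).symm.app X) (T.le_shift _ hX)
  ge_one_le X hX :=
    T.ge_iso ((shiftFunctorAdd' C 1 (-1) 0 (by norm_num)).symm.app X) (T.ge_shift _ hX)
  exists_triangle_zero_one A := by
    obtain ⟨X, Y, hX, hY, f, g, h, hT⟩ := T.triangle (A⟦(1 : ℤ)⟧)
    refine ⟨_, _, ?_, ?_, _, _, _, Triangle.distinguished_mk_comp_iso _ _ _
      (Triangle.shift_distinguished _ hT (-1))
      ((shiftFunctorCompIsoId C (1 : ℤ) (-1) (by norm_num)).app A)⟩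
    · exact T.le_iso (((shiftFunctorCompIsoId C (1 : ℤ) (-1) (by norm_num)).app X).symm ≪≫
        (shiftFunctorZero C ℤ).symm.app _) hX
    · exact T.ge_iso ((shiftFunctorCompIsoId C (-1 : ℤ) 1 (by norm_num)).app Y).symm hY

lemma mem_le_iff (X : C) : X ∈ T.le ↔ T.toTriangulated_s9.le 0 X :=
  ⟨T.le_iso ((shiftFunctorZero C ℤ).symm.app X), T.le_iso ((shiftFunctorZero C ℤ).app X)⟩

end TStructure

section MathlibTStructure

variable (t : Triangulated.TStructure C)

lemma isClosedUnderSumsSummandsExtensions_le (n : ℤ) :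
    IsClosedUnderSumsSummandsExtensions {X | t.le n X} where
  of_iso _ _ e hY := (t.le n).prop_of_iso e.symm hY
  zero_mem _ hX := (t.isLE_of_isZero hX n).le
  dirSum_mem Z X Y := by
    rintro ⟨i₁, i₂, p₁, p₂, -, -, -, -, hid⟩ hX hY
    refine ((t.isLE_iff_orthogonal n (n + 1) rfl Z).2 fun W f hW => ?_).le
    have h₁ : i₁ ≫ f = 0 := t.zero_of_isLE_of_isGE _ n (n + 1) (by omega) ⟨hX⟩ hW
    have h₂ : i₂ ≫ f = 0 := t.zero_of_isLE_of_isGE _ n (n + 1) (by omega) ⟨hY⟩ hW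
    calc f = (p₁ ≫ i₁ + p₂ ≫ i₂) ≫ f := by rw [hid, Category.id_comp]
      _ = 0 := by rw [Preadditive.add_comp, Category.assoc, Category.assoc, h₁, h₂,
        comp_zero, comp_zero, add_zero]
  summand_mem Z X Y := by
    rintro ⟨i₁, -, p₁, -, hid, -⟩ hZ
    refine ((t.isLE_iff_orthogonal n (n + 1) rfl X).2 fun W f hW => ?_).le
    calc f = i₁ ≫ p₁ ≫ f := by rw [← Category.assoc, hid, Category.id_comp]
      _ = 0 := by rw [t.zero_of_isLE_of_isGE (p₁ ≫ f) n (n + 1) (by omega) ⟨hZ⟩ hW, comp_zero]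
  star_subset := by
    rintro Z ⟨X, Y, f, g, h, hX, hY, hT⟩
    exact (t.isLE₂ _ hT n ⟨hX⟩ ⟨hY⟩).le

lemma gen_Iic_subset_le {G : C} {a : ℤ} (hG : t.le a G) (e : ℤ) :
    gen C G (Set.Iic e) ⊆ {X | t.le (a + e) X} := by
  refine (isClosedUnderSumsSummandsExtensions_le t (a + e)).gen_subset ?_
  rintro X ⟨i, hi, ⟨hX⟩⟩
  have hGi : t.le (a + i) (G⟦-i⟧) := t.le_shift a (-i) (a + i) (by ring) G hG
  exact (t.le _).prop_of_iso hX.symm (t.le_monotone (by rw [Set.mem_Iic] at hi; omega) _ hGi)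

lemma le_of_le_of_fdOpLE (t' : Triangulated.TStructure C) {G : C} {e : ℤ} (hfd : fdOpLE C G e)
    {a c : ℤ} (hGc : t.ge c G) (hGa : t'.le a G) {m : ℤ} {X : C} (hX : t.le m X) :
    t'.le (m - c + a + e) X := by
  have hXc : t.le c (X⟦m - c⟧) := t.le_shift m (m - c) c (by ring) X hX
  have hperp : ∀ j : ℤ, j ≤ -1 → ∀ f : X⟦m - c⟧ ⟶ G⟦j⟧, f = 0 := fun j hj f =>
    t.zero_of_isLE_of_isGE f c (c - j) (by omega) ⟨hXc⟩ ⟨t.ge_shift c j (c - j) (by ring) G hGc⟩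
  have : t'.IsLE (X⟦m - c⟧) (a + e) := ⟨gen_Iic_subset_le t' hGa e (hfd _ hperp)⟩
  exact (t'.isLE_of_shift X (m - c + a + e) (m - c) (a + e) (by ring)).le

end MathlibTStructure

/-- If `fd(𝒮ᵒᵖ, Gᵒᵖ) ≤ e` for some object `G` and `e ∈ ℕ`, then any two
bounded t-structures on `𝒮` are equivalent: there is `n ∈ ℕ` with
`𝒮₁^{≤-n} ⊆ 𝒮₂^{≤0} ⊆ 𝒮₁^{≤n}`. -/
theorem bounded_tstructures_equivalent_of_fdOp_finite
    (C : Type u) [Category.{v} C] [HasZeroObject C] [HasShift C ℤ]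
    [Preadditive C] [∀ n : ℤ, (shiftFunctor C n).Additive] [Pretriangulated C]
    (G : C) (e : ℕ) (hfdop : fdOpLE C G (e : ℤ))
    (T₁ T₂ : TStructure C) (h₁ : T₁.Bounded) (h₂ : T₂.Bounded) :
    ∃ n : ℕ, (∀ X : C, (X⟦(-(n : ℤ))⟧ : C) ∈ T₁.le → X ∈ T₂.le) ∧
      (∀ X ∈ T₂.le, (X⟦(n : ℤ)⟧ : C) ∈ T₁.le) := by
  obtain ⟨a₁, ha₁⟩ := h₁.1 G
  obtain ⟨c₁, hc₁⟩ := h₁.2 G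
  obtain ⟨a₂, ha₂⟩ := h₂.1 G
  obtain ⟨c₂, hc₂⟩ := h₂.2 G
  refine ⟨a₁ + a₂ + c₁ + c₂ + e, fun X hX => ?_, fun X hX => ?_⟩
  · have hX₂ := le_of_le_of_fdOpLE T₁.toTriangulated_s9 T₂.toTriangulated_s9 hfdop hc₁ ha₂ hX
    exact (T₂.mem_le_iff X).2 (T₂.toTriangulated_s9.le_monotone (by omega) _ hX₂)
  · have hX₁ := le_of_le_of_fdOpLE T₂.toTriangulated_s9 T₁.toTriangulated_s9 hfdop hc₂ ha₁
      ((T₂.mem_le_iff X).1 hX)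
    exact T₁.toTriangulated_s9.le_monotone (by omega) _ hX₁

end Paper
end
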